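/- arXiv:2211.01574 — 6 statements merged into one kernel-verified Lean document; each statement's English description precedes it below -/
import Mathlib

section
/- Let X₁ ⊆ X₀ and Y₁ ⊆ Y₀ be normed spaces, 0 < α ≤ 1, and let T : X₀ → Y₀ with T(X₁) ⊆ Y₁ be globally α-Hölderian at both levels: ‖Ta − Tb‖_{Y₀} ≤ M₀‖a − b‖_{X₀}^α for all a, b ∈ X₀, and ‖Ta − Tb‖_{Y₁} ≤ M₁‖a − b‖_{X₁}^α for all a, b ∈ X₁. Then for all a ∈ X₀, b ∈ X₁ and all t > 0, K(Ta − Tb, t^α; Y₀,Y₁) ≤ 2·max(M₀, M₁)·K(a − b, t; X₀,X₁)^α. Furthermore, if X₁ is dense in X₀, then the same inequality holds for all a, b ∈ X₀. -/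
open Set

/-- The Peetre K-functional for the couple `(X₀, X₁)` where `X₁` is a subgroup of `X₀`
equipped with its own norm `N1`:
`K(a, t) = inf { ‖a - a₁‖_{X₀} + t * N1 a₁ : a₁ ∈ X₁ }`. -/
noncomputable def Kfun {X : Type*} [NormedAddCommGroup X] (X1 : AddSubgroup X)
    (N1 : X → ℝ) (a : X) (t : ℝ) : ℝ :=
  sInf ((fun a1 => ‖a - a1‖ + t * N1 a1) '' (X1 : Set X))

lemma Kfun_nonneg {X : Type*} [NormedAddCommGroup X] (X1 : AddSubgroup X)
    (N1 : X → ℝ) (hN1 : ∀ x, 0 ≤ N1 x) (a : X) {t : ℝ} (ht : 0 ≤ t) :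
    0 ≤ Kfun X1 N1 a t :=
  Real.sInf_nonneg (by
    rintro x ⟨a1, _, rfl⟩
    have := hN1 a1
    positivity)

lemma Kfun_le {X : Type*} [NormedAddCommGroup X] (X1 : AddSubgroup X)
    (N1 : X → ℝ) (hN1 : ∀ x, 0 ≤ N1 x) (a : X) {t : ℝ} (ht : 0 ≤ t)
    {a1 : X} (ha1 : a1 ∈ X1) :
    Kfun X1 N1 a t ≤ ‖a - a1‖ + t * N1 a1 := by
  apply csInf_le
  · refine ⟨0, ?_⟩
    rintro x ⟨b1, _, rfl⟩
    have := hN1 b1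
    positivity
  · exact ⟨a1, ha1, rfl⟩

lemma Kfun_exists_lt {X : Type*} [NormedAddCommGroup X] (X1 : AddSubgroup X)
    (N1 : X → ℝ) (a : X) (t : ℝ) {ε : ℝ} (hε : 0 < ε) :
    ∃ a1 ∈ X1, ‖a - a1‖ + t * N1 a1 < Kfun X1 N1 a t + ε := by
  have hne : ((fun a1 => ‖a - a1‖ + t * N1 a1) '' (X1 : Set X)).Nonempty :=
    ⟨_, ⟨0, X1.zero_mem, rfl⟩⟩
  have h : sInf ((fun a1 => ‖a - a1‖ + t * N1 a1) '' (X1 : Set X)) <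
      Kfun X1 N1 a t + ε := lt_add_of_pos_right _ hε
  obtain ⟨x, ⟨a1, ha1, rfl⟩, hx⟩ := exists_lt_of_csInf_lt hne h
  exact ⟨a1, ha1, hx⟩

lemma stmt2_core {X0 Y0 : Type*} [NormedAddCommGroup X0] [NormedAddCommGroup Y0]
    (X1 : AddSubgroup X0) (Y1 : AddSubgroup Y0) (N1 : X0 → ℝ) (NY1 : Y0 → ℝ)
    (hN1 : ∀ x, 0 ≤ N1 x) (hNY1 : ∀ y, 0 ≤ NY1 y)
    (α : ℝ) (hα0 : 0 < α)
    (M0 M1 : ℝ) (hM0 : 0 < M0) (hM1 : 0 < M1)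
    (T : X0 → Y0) (hT1 : ∀ a ∈ X1, T a ∈ Y1)
    (hHolder0 : ∀ a b : X0, ‖T a - T b‖ ≤ M0 * ‖a - b‖ ^ α)
    (hHolder1 : ∀ a ∈ X1, ∀ b ∈ X1, NY1 (T a - T b) ≤ M1 * N1 (a - b) ^ α)
    (a b : X0) (hb : ∀ δ : ℝ, 0 < δ → ∃ b' ∈ X1, ‖b - b'‖ < δ)
    (t : ℝ) (ht : 0 < t) :
    Kfun Y1 NY1 (T a - T b) (t ^ α) ≤
      2 * max M0 M1 * Kfun X1 N1 (a - b) t ^ α := by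
  set M : ℝ := max M0 M1 with hM
  set K : ℝ := Kfun X1 N1 (a - b) t with hK
  have hKnn : 0 ≤ K := Kfun_nonneg X1 N1 hN1 _ ht.le
  have hMnn : 0 ≤ M := le_trans hM0.le (le_max_left _ _)
  have htα : 0 ≤ t ^ α := Real.rpow_nonneg ht.le α
  -- pointwise bound
  have key : ∀ δ : ℝ, 0 < δ →
      Kfun Y1 NY1 (T a - T b) (t ^ α) ≤ 2 * M * (K + 2 * δ) ^ α + M0 * δ ^ α := by
    intro δ hδ
    obtain ⟨b', hb'1, hb'⟩ := hb δ hδ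
    obtain ⟨a1, ha1, hlt⟩ := Kfun_exists_lt X1 N1 (a - b) t hδ
    set c : X0 := b' + a1 with hc
    have hc1 : c ∈ X1 := X1.add_mem hb'1 ha1
    have hy1 : T c - T b' ∈ Y1 := Y1.sub_mem (hT1 _ hc1) (hT1 _ hb'1)
    have step1 : Kfun Y1 NY1 (T a - T b) (t ^ α) ≤
        ‖(T a - T b) - (T c - T b')‖ + t ^ α * NY1 (T c - T b') :=
      Kfun_le Y1 NY1 hNY1 _ htα hy1
    have hrw : (T a - T b) - (T c - T b') = (T a - T c) - (T b - T b') := by abel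
    have step2 : ‖(T a - T b) - (T c - T b')‖ ≤ M0 * ‖a - c‖ ^ α + M0 * ‖b - b'‖ ^ α := by
      rw [hrw]
      exact le_trans (norm_sub_le _ _) (add_le_add (hHolder0 a c) (hHolder0 b b'))
    have hac : ‖a - c‖ ≤ K + 2 * δ := by
      have : a - c = (a - b - a1) + (b - b') := by rw [hc]; abel
      rw [this]
      calc ‖(a - b - a1) + (b - b')‖ ≤ ‖a - b - a1‖ + ‖b - b'‖ := norm_add_le _ _
        _ ≤ K + δ + δ := by
            have h1 : ‖a - b - a1‖ ≤ K + δ := by nlinarith [mul_nonneg ht.le (hN1 a1)]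
            linarith
        _ = K + 2 * δ := by ring
    have hbb' : ‖b - b'‖ ^ α ≤ δ ^ α :=
      Real.rpow_le_rpow (norm_nonneg _) hb'.le hα0.le
    have hNa1 : t * N1 a1 ≤ K + 2 * δ := by nlinarith [norm_nonneg (a - b - a1)]
    have hca1 : c - b' = a1 := by rw [hc]; abel
    have step3 : NY1 (T c - T b') ≤ M1 * N1 a1 ^ α := by
      have := hHolder1 c hc1 b' hb'1
      rwa [hca1] at this
    have hterm3 : t ^ α * (M1 * N1 a1 ^ α) ≤ M * (K + 2 * δ) ^ α := by
      have h1 : t ^ α * (M1 * N1 a1 ^ α) = M1 * (t * N1 a1) ^ α := by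
        rw [Real.mul_rpow ht.le (hN1 a1)]; ring
      rw [h1]
      have h2 : (t * N1 a1) ^ α ≤ (K + 2 * δ) ^ α :=
        Real.rpow_le_rpow (mul_nonneg ht.le (hN1 a1)) hNa1 hα0.le
      have h3 : M1 ≤ M := le_max_right _ _
      have h4 : 0 ≤ (t * N1 a1) ^ α := Real.rpow_nonneg (mul_nonneg ht.le (hN1 a1)) α
      nlinarith [Real.rpow_nonneg (by linarith : (0:ℝ) ≤ K + 2 * δ) α]
    have hterm1 : M0 * ‖a - c‖ ^ α ≤ M * (K + 2 * δ) ^ α := by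
      have h2 : ‖a - c‖ ^ α ≤ (K + 2 * δ) ^ α :=
        Real.rpow_le_rpow (norm_nonneg _) hac hα0.le
      have h3 : M0 ≤ M := le_max_left _ _
      nlinarith [Real.rpow_nonneg (norm_nonneg (a - c)) α]
    calc Kfun Y1 NY1 (T a - T b) (t ^ α)
        ≤ ‖(T a - T b) - (T c - T b')‖ + t ^ α * NY1 (T c - T b') := step1
      _ ≤ (M0 * ‖a - c‖ ^ α + M0 * ‖b - b'‖ ^ α) + t ^ α * (M1 * N1 a1 ^ α) := by
          refine add_le_add step2 (mul_le_mul_of_nonneg_left step3 htα)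
      _ ≤ M * (K + 2 * δ) ^ α + M0 * δ ^ α + M * (K + 2 * δ) ^ α := by
          have := mul_le_mul_of_nonneg_left hbb' hM0.le
          linarith [hterm1, hterm3]
      _ = 2 * M * (K + 2 * δ) ^ α + M0 * δ ^ α := by ring
  -- limit as δ → 0⁺
  have hcont : ContinuousAt (fun δ : ℝ => 2 * M * (K + 2 * δ) ^ α + M0 * δ ^ α) 0 := by
    have h1 : ContinuousAt (fun δ : ℝ => (K + 2 * δ) ^ α) 0 :=
      ContinuousAt.rpow_const (by fun_prop) (Or.inr hα0.le)
    have h2 : ContinuousAt (fun δ : ℝ => δ ^ α) 0 :=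
      ContinuousAt.rpow_const (by fun_prop) (Or.inr hα0.le)
    fun_prop
  have htend : Filter.Tendsto (fun δ : ℝ => 2 * M * (K + 2 * δ) ^ α + M0 * δ ^ α)
      (nhdsWithin 0 (Set.Ioi 0)) (nhds (2 * M * K ^ α)) := by
    have := hcont.tendsto.mono_left (nhdsWithin_le_nhds (s := Set.Ioi (0:ℝ)))
    simpa [Real.zero_rpow hα0.ne'] using this
  exact ge_of_tendsto htend (eventually_nhdsWithin_of_forall fun δ hδ => key δ hδ)

/-- Let `X₁ ⊆ X₀`, `Y₁ ⊆ Y₀` be normed spaces, `0 < α ≤ 1`, and let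
`T : X₀ → Y₀` with `T(X₁) ⊆ Y₁` be globally `α`-Hölderian at both levels:
`‖Ta − Tb‖_{Y₀} ≤ M₀‖a−b‖_{X₀}^α` for all `a, b ∈ X₀` and
`‖Ta − Tb‖_{Y₁} ≤ M₁‖a−b‖_{X₁}^α` for all `a, b ∈ X₁`. Then for all `a ∈ X₀`, `b ∈ X₁`
and all `t > 0`, `K(Ta − Tb, t^α; Y₀,Y₁) ≤ 2·max(M₀,M₁)·K(a−b, t; X₀,X₁)^α`;
furthermore, if `X₁` is dense in `X₀`, the same holds for all `a, b ∈ X₀`. -/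
theorem stmt2 {X0 Y0 : Type*} [NormedAddCommGroup X0] [NormedAddCommGroup Y0]
    (X1 : AddSubgroup X0) (Y1 : AddSubgroup Y0) (N1 : X0 → ℝ) (NY1 : Y0 → ℝ)
    (hN1 : ∀ x, 0 ≤ N1 x) (hNY1 : ∀ y, 0 ≤ NY1 y)
    (α : ℝ) (hα0 : 0 < α) (hα1 : α ≤ 1)
    (M0 M1 : ℝ) (hM0 : 0 < M0) (hM1 : 0 < M1)
    (T : X0 → Y0) (hT1 : ∀ a ∈ X1, T a ∈ Y1)
    (hHolder0 : ∀ a b : X0, ‖T a - T b‖ ≤ M0 * ‖a - b‖ ^ α)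
    (hHolder1 : ∀ a ∈ X1, ∀ b ∈ X1, NY1 (T a - T b) ≤ M1 * N1 (a - b) ^ α) :
    (∀ a : X0, ∀ b ∈ X1, ∀ t : ℝ, 0 < t →
      Kfun Y1 NY1 (T a - T b) (t ^ α) ≤
        2 * max M0 M1 * Kfun X1 N1 (a - b) t ^ α) ∧
    (Dense (X1 : Set X0) → ∀ a b : X0, ∀ t : ℝ, 0 < t →
      Kfun Y1 NY1 (T a - T b) (t ^ α) ≤
        2 * max M0 M1 * Kfun X1 N1 (a - b) t ^ α) := by
  refine ⟨fun a b hb t ht => ?_, fun hdense a b t ht => ?_⟩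
  · exact stmt2_core X1 Y1 N1 NY1 hN1 hNY1 α hα0 M0 M1 hM0 hM1 T hT1 hHolder0 hHolder1
      a b (fun δ hδ => ⟨b, hb, by simpa using hδ⟩) t ht
  · refine stmt2_core X1 Y1 N1 NY1 hN1 hNY1 α hα0 M0 M1 hM0 hM1 T hT1 hHolder0 hHolder1
      a b (fun δ hδ => ?_) t ht
    have := hdense b
    rw [Metric.mem_closure_iff] at this
    obtain ⟨b', hb'1, hb'⟩ := this δ hδ
    exact ⟨b', hb'1, by rwa [← dist_eq_norm]⟩
end

section
/- (Troisi's anisotropic Sobolev inequality, product form.) Let n ≥ 2, let p₁, …, pₙ satisfy 1 ≤ pᵢ < ∞, define 1/p = (1/n)·∑_{i=1}^n 1/pᵢ and assume ∑_{i=1}^n 1/pᵢ > 1 (i.e. p < n), and set p* = np/(n−p). Then there exists a constant C = C(n, p₁, …, pₙ) such that for all u ∈ C_c^∞(ℝⁿ): ( ∫_{ℝⁿ} |u|^{p*} dx )^{n/p*} ≤ C · ∏_{i=1}^n ( ∫_{ℝⁿ} |∂u/∂xᵢ|^{pᵢ} dx )^{1/pᵢ}. -/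
open MeasureTheory
open scoped ENNReal

/-- The harmonic-mean exponent `p` defined by `1/p = (1/n) ∑ᵢ 1/pᵢ`. -/
noncomputable def pbar (n : ℕ) (p : Fin n → ℝ) : ℝ := n / ∑ i, 1 / p i

/-- The anisotropic Sobolev exponent `p* = np/(n−p)`. -/
noncomputable def pstar (n : ℕ) (p : Fin n → ℝ) : ℝ :=
  n * pbar n p / (n - pbar n p)

/-!
Write `s = ∑ᵢ 1/pᵢ`, `q = n/(s-1)` (this is `p*`) and `tᵢ = 1 + q(1 - 1/pᵢ)`, so that
`∑ᵢ tᵢ = (n-1)q`. On the line through `x` in direction `i`, the fundamental theorem of calculus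
gives `|u x|^{tᵢ} ≤ ∫ tᵢ |u|^{tᵢ-1} |∂ᵢu|`. Taking the product over `i` of the `(n-1)`-th roots
bounds `|u x|^q`, and the grid-lines (Loomis–Whitney) inequality then bounds `∫|u|^q` by
`n^{n/(n-1)} ∏ᵢ (∫ tᵢ |u|^{tᵢ-1} |∂ᵢu|)^{1/(n-1)}`. Since `(tᵢ-1) pᵢ/(pᵢ-1) = q`, Hölder's
inequality bounds the `i`-th integral by `tᵢ (∫|u|^q)^{1-1/pᵢ} ‖∂ᵢu‖_{pᵢ}`. After raising to the
power `n-1` the powers of `∫|u|^q` on the right add up to `n - s`; cancelling them leaves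
`(∫|u|^q)^{s-1} ≤ nⁿ ∏ᵢ tᵢ ‖∂ᵢu‖_{pᵢ}`, and `s - 1 = n/p*`.
-/

open Function Finset

theorem ENNReal.rpow_sum_of_nonneg {ι : Type*} (s : Finset ι) (a : ℝ≥0∞) {c : ι → ℝ}
    (hc : ∀ i ∈ s, 0 ≤ c i) : a ^ (∑ i ∈ s, c i) = ∏ i ∈ s, a ^ c i := by
  induction s using Finset.cons_induction with
  | empty => simp
  | cons i s hi ih =>
    rw [sum_cons, prod_cons, ENNReal.rpow_add_of_nonneg _ _ (hc i (mem_cons_self i s))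
      (sum_nonneg fun j hj => hc j (mem_cons_of_mem hj)), ih fun j hj => hc j (mem_cons_of_mem hj)]

section LineEstimates

variable {F : Type*} [NormedAddCommGroup F]

theorem HasCompactSupport.enorm_le_lintegral_deriv [NormedSpace ℝ F] {f : ℝ → F}
    (hf : ContDiff ℝ 1 f) (h2f : HasCompactSupport f) (a : ℝ) :
    ‖f a‖ₑ ≤ ∫⁻ r, ‖deriv f r‖ₑ :=
  (h2f.enorm_le_lintegral_Ici_deriv hf a).trans (lintegral_mono' Measure.restrict_le_self le_rfl)

theorem HasCompactSupport.enorm_rpow_le_lintegral_deriv [InnerProductSpace ℝ F] {f : ℝ → F}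
    (hf : ContDiff ℝ 1 f) (h2f : HasCompactSupport f) (a : ℝ) {t : ℝ} (ht : 1 ≤ t) :
    ‖f a‖ₑ ^ t ≤ ∫⁻ r, ENNReal.ofReal t * ‖f r‖ₑ ^ (t - 1) * ‖deriv f r‖ₑ := by
  rcases ht.eq_or_lt with rfl | ht
  · simpa using h2f.enorm_le_lintegral_deriv hf a
  have ht0 : 0 < t := one_pos.trans ht
  set g : ℝ → ℝ := fun r => ‖f r‖ ^ t
  have hg : ContDiff ℝ 1 g := hf.norm_rpow ht
  have h2g : HasCompactSupport g := h2f.comp_left (g := fun y : F => ‖y‖ ^ t) (by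
    simp [Real.zero_rpow ht0.ne'])
  have hga : ‖g a‖ₑ = ‖f a‖ₑ ^ t := by
    rw [Real.enorm_eq_ofReal (by positivity), ← ofReal_norm, ENNReal.ofReal_rpow_of_nonneg
      (norm_nonneg _) ht0.le]
  have hderiv (r : ℝ) : ‖deriv g r‖ₑ ≤ ENNReal.ofReal t * ‖f r‖ₑ ^ (t - 1) * ‖deriv f r‖ₑ := by
    have := norm_fderiv_norm_rpow_le (hf.differentiable one_ne_zero) (x := r) ht
    rw [← norm_deriv_eq_norm_fderiv, ← norm_deriv_eq_norm_fderiv] at this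
    rw [← ofReal_norm, ← ofReal_norm, ← ofReal_norm, ENNReal.ofReal_rpow_of_nonneg
      (norm_nonneg _) (by linarith), ← ENNReal.ofReal_mul ht0.le, ← ENNReal.ofReal_mul
      (by positivity)]
    exact ENNReal.ofReal_le_ofReal this
  rw [← hga]
  exact (h2g.enorm_le_lintegral_deriv hg a).trans (lintegral_mono hderiv)

variable {ι : Type*} [Fintype ι] [DecidableEq ι]

theorem deriv_comp_update {u : (ι → ℝ) → F} [NormedSpace ℝ F] (x : ι → ℝ) (i : ι) {r : ℝ}
    (hu : DifferentiableAt ℝ u (update x i r)) :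
    deriv (u ∘ update x i) r = fderiv ℝ u (update x i r) (Pi.single i 1) := by
  rw [fderiv_comp_deriv _ hu (hasDerivAt_update x i r).differentiableAt, deriv_update]

theorem HasCompactSupport.enorm_rpow_le_lintegral_fderiv_apply_single [InnerProductSpace ℝ F]
    {u : (ι → ℝ) → F} (hu : ContDiff ℝ 1 u) (h2u : HasCompactSupport u) (x : ι → ℝ) (i : ι)
    {t : ℝ} (ht : 1 ≤ t) :
    ‖u x‖ₑ ^ t ≤ ∫⁻ r, ENNReal.ofReal t * ‖u (update x i r)‖ₑ ^ (t - 1) *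
      ‖fderiv ℝ u (update x i r) (Pi.single i 1)‖ₑ := by
  have h := (h2u.comp_isClosedEmbedding (isClosedEmbedding_update x i)
    ).enorm_rpow_le_lintegral_deriv (hu.comp (contDiff_update 1 x i)) (x i) ht
  simp only [comp_apply, update_eq_self] at h
  simpa only [deriv_comp_update x i (hu.differentiable one_ne_zero _)] using h

theorem HasCompactSupport.eq_zero_of_fderiv_apply_single_eq_zero [NormedSpace ℝ F]
    {u : (ι → ℝ) → F} (hu : ContDiff ℝ 1 u) (h2u : HasCompactSupport u) (i : ι)
    (h : ∀ y, fderiv ℝ u y (Pi.single i 1) = 0) : u = 0 := by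
  ext x
  have := (h2u.comp_isClosedEmbedding (isClosedEmbedding_update x i)).enorm_le_lintegral_deriv
    (hu.comp (contDiff_update 1 x i)) (x i)
  simpa [deriv_comp_update x i (hu.differentiable one_ne_zero _), h] using this

end LineEstimates

section Holder

variable {α : Type*} [MeasurableSpace α] {μ : Measure α}

theorem lintegral_rpow_mul_le_of_one_le {f g : α → ℝ≥0∞} (hf : AEMeasurable f μ)
    (hg : AEMeasurable g μ) {p : ℝ} (hp : 1 ≤ p) (q : ℝ) :
    ∫⁻ x, f x ^ (q * (1 - 1 / p)) * g x ∂μ ≤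
      (∫⁻ x, f x ^ q ∂μ) ^ (1 - 1 / p) * (∫⁻ x, g x ^ p ∂μ) ^ (1 / p) := by
  rcases hp.eq_or_lt with rfl | hp
  · simp
  have hpq : (p / (p - 1)).HolderConjugate p := (Real.HolderConjugate.conjExponent hp).symm
  have h1p : 1 / (p / (p - 1)) = 1 - 1 / p := by field_simp
  have hexp (x : α) : (f x ^ (q * (1 - 1 / p))) ^ (p / (p - 1)) = f x ^ q := by
    rw [← ENNReal.rpow_mul]
    congr 1
    field_simp
  have := ENNReal.lintegral_mul_le_Lp_mul_Lq μ hpq (hf.pow_const (q * (1 - 1 / p))) hg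
  simpa only [Pi.mul_apply, hexp, h1p] using this

end Holder

section GridLines

variable {ι : Type*} [Fintype ι] [DecidableEq ι] {A : ι → Type*} [∀ i, MeasurableSpace (A i)]
  (μ : ∀ i, Measure (A i)) [∀ i, SigmaFinite (μ i)]

theorem lintegral_prod_lintegral_pow_le_of_lintegral_le {p : ℝ}
    (hp : Real.HolderConjugate (Fintype.card ι) p) {g : ι → (∀ i, A i) → ℝ≥0∞}
    (hg : ∀ i, Measurable (g i))
    {a : ι → ℝ≥0∞} (hga : ∀ i, ∫⁻ x, g i x ∂.pi μ ≤ a i) (ha₀ : ∀ i, a i ≠ 0)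
    (ha : ∀ i, a i ≠ ⊤) :
    ∫⁻ x, ∏ i, (∫⁻ xᵢ, g i (update x i xᵢ) ∂μ i) ^ ((1 : ℝ) / (Fintype.card ι - 1 : ℝ)) ∂.pi μ ≤
      (Fintype.card ι : ℝ≥0∞) ^ p * ∏ i, a i ^ ((1 : ℝ) / (Fintype.card ι - 1 : ℝ)) := by
  have hm : (0 : ℝ) ≤ 1 / (Fintype.card ι - 1 : ℝ) := by
    have : (1 : ℝ) < Fintype.card ι := hp.lt
    exact one_div_nonneg.mpr (by linarith)
  -- Normalising each `g i` by `a i` and summing gives one function `f` dominating all of them.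
  set f : (∀ i, A i) → ℝ≥0∞ := fun x => ∑ i, (a i)⁻¹ * g i x
  have hf : Measurable f := Finset.measurable_sum _ fun i _ => (hg i).const_mul _
  have hgf (i : ι) (x : ∀ i, A i) : g i x ≤ a i * f x := by
    calc g i x = a i * ((a i)⁻¹ * g i x) := by
          rw [← mul_assoc, ENNReal.mul_inv_cancel (ha₀ i) (ha i), one_mul]
      _ ≤ a i * f x := by
          gcongr
          exact Finset.single_le_sum (f := fun j => (a j)⁻¹ * g j x) (fun _ _ => zero_le)
            (mem_univ i)
  have hfint : ∫⁻ x, f x ∂.pi μ ≤ Fintype.card ι := by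
    rw [lintegral_finsetSum _ fun i _ => (hg i).const_mul _]
    calc ∑ i, ∫⁻ x, (a i)⁻¹ * g i x ∂.pi μ
        ≤ ∑ i, (a i)⁻¹ * a i := by
          gcongr with i
          rw [lintegral_const_mul _ (hg i)]
          gcongr
          exact hga i
      _ = Fintype.card ι := by simp [ENNReal.inv_mul_cancel, ha₀, ha]
  calc ∫⁻ x, ∏ i, (∫⁻ xᵢ, g i (update x i xᵢ) ∂μ i) ^ ((1 : ℝ) / (Fintype.card ι - 1 : ℝ)) ∂.pi μ
      ≤ ∫⁻ x, ∏ i, (a i * ∫⁻ xᵢ, f (update x i xᵢ) ∂μ i) ^ ((1 : ℝ) / (Fintype.card ι - 1 : ℝ))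
          ∂.pi μ := by
        gcongr with x i
        rw [← lintegral_const_mul' _ _ (ha i)]
        exact lintegral_mono fun _ => hgf i _
    _ = (∏ i, a i ^ ((1 : ℝ) / (Fintype.card ι - 1 : ℝ))) *
          ∫⁻ x, ∏ i, (∫⁻ xᵢ, f (update x i xᵢ) ∂μ i) ^ ((1 : ℝ) / (Fintype.card ι - 1 : ℝ))
            ∂.pi μ := by
        simp_rw [ENNReal.mul_rpow_of_nonneg _ _ hm, prod_mul_distrib]
        exact lintegral_const_mul' _ _ (ENNReal.prod_ne_top fun i _ =>
          ENNReal.rpow_ne_top_of_nonneg hm (ha i))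
    _ ≤ (∏ i, a i ^ ((1 : ℝ) / (Fintype.card ι - 1 : ℝ))) * (∫⁻ x, f x ∂.pi μ) ^ p := by
        gcongr
        exact lintegral_prod_lintegral_pow_le μ hp hf
    _ ≤ (Fintype.card ι : ℝ≥0∞) ^ p * ∏ i, a i ^ ((1 : ℝ) / (Fintype.card ι - 1 : ℝ)) := by
        rw [mul_comm]
        gcongr
        exact hp.symm.nonneg

theorem lintegral_rpow_le_of_rpow_le_lintegral_update {p : ℝ}
    (hp : Real.HolderConjugate (Fintype.card ι) p) {f : (∀ i, A i) → ℝ≥0∞} {q : ℝ} {t : ι → ℝ}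
    (ht : ∀ i, 0 ≤ t i) (htq : ∑ i, t i = (Fintype.card ι - 1) * q)
    {g : ι → (∀ i, A i) → ℝ≥0∞} (hg : ∀ i, Measurable (g i))
    (hfg : ∀ i x, f x ^ t i ≤ ∫⁻ xᵢ, g i (update x i xᵢ) ∂μ i)
    {a : ι → ℝ≥0∞} (hga : ∀ i, ∫⁻ x, g i x ∂.pi μ ≤ a i) (ha₀ : ∀ i, a i ≠ 0)
    (ha : ∀ i, a i ≠ ⊤) :
    ∫⁻ x, f x ^ q ∂.pi μ ≤ (Fintype.card ι : ℝ≥0∞) ^ p *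
      ∏ i, a i ^ ((1 : ℝ) / (Fintype.card ι - 1 : ℝ)) := by
  have hn : (0 : ℝ) < Fintype.card ι - 1 := by linarith [hp.lt]
  have hm : (0 : ℝ) ≤ 1 / (Fintype.card ι - 1) := by positivity
  calc ∫⁻ x, f x ^ q ∂.pi μ
      = ∫⁻ x, ∏ i, (f x ^ t i) ^ ((1 : ℝ) / (Fintype.card ι - 1 : ℝ)) ∂.pi μ := by
        refine lintegral_congr fun x => ?_
        simp_rw [← ENNReal.rpow_mul]
        rw [← ENNReal.rpow_sum_of_nonneg _ _ fun i _ => by have := ht i; positivity,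
          ← Finset.sum_mul, htq, mul_one_div, mul_div_cancel_left₀ _ hn.ne']
    _ ≤ ∫⁻ x, ∏ i, (∫⁻ xᵢ, g i (update x i xᵢ) ∂μ i) ^ ((1 : ℝ) / (Fintype.card ι - 1 : ℝ))
          ∂.pi μ := by
        gcongr with x i
        exact hfg i x
    _ ≤ _ := lintegral_prod_lintegral_pow_le_of_lintegral_le μ hp hg hga ha₀ ha

end GridLines

theorem HasCompactSupport.lintegral_enorm_rpow_ne_top {X E : Type*} [TopologicalSpace X]
    [MeasurableSpace X] [OpensMeasurableSpace X] {μ : Measure X} [IsFiniteMeasureOnCompacts μ]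
    [NormedAddCommGroup E] {f : X → E} (hf : Continuous f) (h2f : HasCompactSupport f) {c : ℝ}
    (hc : 0 < c) : ∫⁻ x, ‖f x‖ₑ ^ c ∂μ ≠ ⊤ := by
  have := (hf.memLp_of_hasCompactSupport (μ := μ) (p := ENNReal.ofReal c) h2f).eLpNorm_lt_top
  simpa [ENNReal.toReal_ofReal hc.le] using
    (lintegral_rpow_enorm_lt_top_of_eLpNorm_lt_top (by simpa using hc) ENNReal.ofReal_ne_top
      this).ne

theorem ENNReal.rpow_sub_sum_le_of_le_mul_prod {ι : Type*} [Fintype ι] {A K : ℝ≥0∞}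
    (hA₀ : A ≠ 0) (hA : A ≠ ⊤) {m : ℝ} (hm : 0 < m) {c : ι → ℝ≥0∞} {e : ι → ℝ}
    (he : ∀ i, 0 ≤ e i) (h : A ≤ K * ∏ i, (c i * A ^ e i) ^ (1 / m)) :
    A ^ (m - ∑ i, e i) ≤ K ^ m * ∏ i, c i := by
  have hpow := ENNReal.rpow_le_rpow h hm.le
  rw [ENNReal.mul_rpow_of_nonneg _ _ hm.le, prod_rpow_of_nonneg (by positivity),
    ← ENNReal.rpow_mul, one_div_mul_cancel hm.ne', ENNReal.rpow_one, prod_mul_distrib] at hpow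
  have hAe₀ : A ^ ∑ i, e i ≠ 0 := by simp [ENNReal.rpow_eq_zero_iff, hA₀, hA]
  have hAe' : A ^ ∑ i, e i ≠ ⊤ := by simp [ENNReal.rpow_eq_top_iff, hA₀, hA]
  rw [← ENNReal.rpow_sum_of_nonneg _ _ fun i _ => he i] at hpow
  rw [← ENNReal.mul_le_mul_iff_left hAe₀ hAe', ← ENNReal.rpow_add _ _ hA₀ hA,
    sub_add_cancel]
  calc A ^ m ≤ K ^ m * ((∏ i, c i) * A ^ ∑ i, e i) := hpow
    _ = _ := by ring

theorem Continuous.eq_zero_of_lintegral_enorm_rpow_eq_zero {X E : Type*} [TopologicalSpace X]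
    [MeasurableSpace X] [OpensMeasurableSpace X] {μ : Measure X} [μ.IsOpenPosMeasure]
    [NormedAddCommGroup E] {f : X → E} (hf : Continuous f) {c : ℝ} (hc : 0 < c)
    (h : ∫⁻ x, ‖f x‖ₑ ^ c ∂μ = 0) : f = 0 := by
  have hfc : Continuous fun x => ‖f x‖ₑ ^ c :=
    (ENNReal.continuous_rpow_const).comp hf.enorm
  rw [lintegral_eq_zero_iff hfc.measurable, hfc.ae_eq_iff_eq μ continuous_zero] at h
  ext x
  simpa [hc] using congrFun h x

section Exponents

variable {ι : Type*} [Fintype ι] {p : ι → ℝ} {q : ℝ}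

theorem one_lt_card_of_one_lt_sum_one_div (hp : ∀ i, 1 ≤ p i) (hsum : 1 < ∑ i, 1 / p i) :
    (1 : ℝ) < Fintype.card ι :=
  calc (1 : ℝ) < ∑ i, 1 / p i := hsum
    _ ≤ ∑ _i : ι, 1 := Finset.sum_le_sum fun i _ => div_le_one_of_le₀ (hp i) (by linarith [hp i])
    _ = Fintype.card ι := by simp

theorem pos_of_sum_one_div_sub_one_mul_eq_card (hp : ∀ i, 1 ≤ p i) (hsum : 1 < ∑ i, 1 / p i)
    (hq : (∑ i, 1 / p i - 1) * q = Fintype.card ι) : 0 < q :=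
  pos_of_mul_pos_right (hq ▸ zero_lt_one.trans (one_lt_card_of_one_lt_sum_one_div hp hsum))
    (by linarith)

theorem one_le_one_add_mul_one_sub_one_div {r : ℝ} (hr : 1 ≤ r) (hq : 0 ≤ q) :
    1 ≤ 1 + q * (1 - 1 / r) :=
  le_add_of_nonneg_right (mul_nonneg hq (sub_nonneg.mpr (div_le_one_of_le₀ hr (by linarith))))

theorem sum_one_add_mul_one_sub_one_div (hq : (∑ i, 1 / p i - 1) * q = Fintype.card ι) :
    ∑ i, (1 + q * (1 - 1 / p i)) = (Fintype.card ι - 1) * q := by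
  simp only [Finset.sum_add_distrib, ← Finset.mul_sum, Finset.sum_sub_distrib]
  simp only [Finset.sum_const, Finset.card_univ, nsmul_eq_mul, mul_one]
  linear_combination -hq

end Exponents

section Anisotropic

variable {ι : Type*} [Fintype ι] [DecidableEq ι] {F : Type*} [NormedAddCommGroup F]
  [InnerProductSpace ℝ F] {u : (ι → ℝ) → F} {p : ι → ℝ} {q : ℝ}

theorem HasCompactSupport.lintegral_enorm_fderiv_apply_single_rpow_ne_zero
    (hu : ContDiff ℝ 1 u) (h2u : HasCompactSupport u) (hu₀ : u ≠ 0) (i : ι) {c : ℝ}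
    (hc : 0 < c) : ∫⁻ x, ‖fderiv ℝ u x (Pi.single i 1)‖ₑ ^ c ≠ 0 := fun h =>
  hu₀ <| h2u.eq_zero_of_fderiv_apply_single_eq_zero hu i <| congrFun <|
    ((hu.continuous_fderiv one_ne_zero).clm_apply
      continuous_const).eq_zero_of_lintegral_enorm_rpow_eq_zero hc h

theorem HasCompactSupport.lintegral_enorm_rpow_le_prod (hu : ContDiff ℝ 1 u)
    (h2u : HasCompactSupport u) (hp : ∀ i, 1 ≤ p i) (hsum : 1 < ∑ i, 1 / p i)
    (hq : (∑ i, 1 / p i - 1) * q = Fintype.card ι) (hA₀ : ∫⁻ x, ‖u x‖ₑ ^ q ≠ 0) :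
    ∫⁻ x, ‖u x‖ₑ ^ q ≤
      (Fintype.card ι : ℝ≥0∞) ^ ((Fintype.card ι : ℝ) / (Fintype.card ι - 1)) *
        ∏ i, (ENNReal.ofReal (1 + q * (1 - 1 / p i)) *
          (∫⁻ x, ‖fderiv ℝ u x (Pi.single i 1)‖ₑ ^ p i) ^ (1 / p i) *
            (∫⁻ x, ‖u x‖ₑ ^ q) ^ (1 - 1 / p i)) ^ ((1 : ℝ) / (Fintype.card ι - 1)) := by
  set A := ∫⁻ x, ‖u x‖ₑ ^ q
  set t : ι → ℝ := fun i => 1 + q * (1 - 1 / p i)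
  set B : ι → ℝ≥0∞ := fun i => (∫⁻ x, ‖fderiv ℝ u x (Pi.single i 1)‖ₑ ^ p i) ^ (1 / p i)
  set G : ι → (ι → ℝ) → ℝ≥0∞ := fun i z =>
    ENNReal.ofReal (t i) * ‖u z‖ₑ ^ (q * (1 - 1 / p i)) * ‖fderiv ℝ u z (Pi.single i 1)‖ₑ
  have hn : (1 : ℝ) < Fintype.card ι := one_lt_card_of_one_lt_sum_one_div hp hsum
  have hq₀ : 0 < q := pos_of_sum_one_div_sub_one_mul_eq_card hp hsum hq
  have hp₀ (i : ι) : 0 < p i := by linarith [hp i]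
  have ht (i : ι) : 1 ≤ t i := one_le_one_add_mul_one_sub_one_div (hp i) hq₀.le
  have hA : A ≠ ⊤ := h2u.lintegral_enorm_rpow_ne_top hu.continuous hq₀
  have hu₀ : u ≠ 0 := by rintro rfl; simp [A, ENNReal.zero_rpow_of_pos hq₀] at hA₀
  have hcont := hu.continuous_fderiv one_ne_zero
  have hG (i : ι) : Measurable (G i) :=
    (measurable_const.mul (hu.continuous.enorm.measurable.pow_const _)).mul
      (hcont.clm_apply continuous_const).enorm.measurable
  have hline (i : ι) (x : ι → ℝ) : ‖u x‖ₑ ^ t i ≤ ∫⁻ r, G i (update x i r) := by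
    simpa [G, t] using h2u.enorm_rpow_le_lintegral_fderiv_apply_single hu x i (ht i)
  have hGint (i : ι) : ∫⁻ z, G i z ≤ ENNReal.ofReal (t i) * B i * A ^ (1 - 1 / p i) := by
    simp only [G, mul_assoc]
    rw [lintegral_const_mul' _ _ ENNReal.ofReal_ne_top, mul_comm (B i)]
    gcongr
    exact lintegral_rpow_mul_le_of_one_le hu.continuous.enorm.aemeasurable
      (hcont.clm_apply continuous_const).enorm.aemeasurable (hp i) q
  have ha₀ (i : ι) : ENNReal.ofReal (t i) * B i * A ^ (1 - 1 / p i) ≠ 0 := by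
    simp [B, ENNReal.rpow_eq_zero_iff, (hp₀ i).le, hA₀, hA, one_pos.trans_le (ht i),
      h2u.lintegral_enorm_fderiv_apply_single_rpow_ne_zero hu hu₀ i (hp₀ i)]
  have ha (i : ι) : ENNReal.ofReal (t i) * B i * A ^ (1 - 1 / p i) ≠ ⊤ := by
    have := (h2u.fderiv_apply (𝕜 := ℝ) (Pi.single i 1)).lintegral_enorm_rpow_ne_top
      (μ := volume) (hcont.clm_apply continuous_const) (hp₀ i)
    simp [B, ENNReal.mul_eq_top, ENNReal.rpow_eq_top_iff, hA, hA₀, not_lt.mpr (hp₀ i).le, this]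
  exact lintegral_rpow_le_of_rpow_le_lintegral_update (fun _ => volume)
    (Real.HolderConjugate.conjExponent hn) (fun i => by linarith [ht i])
    (sum_one_add_mul_one_sub_one_div hq) hG hline hGint ha₀ ha

theorem HasCompactSupport.lintegral_enorm_rpow_rpow_le_prod (hu : ContDiff ℝ 1 u)
    (h2u : HasCompactSupport u) (hp : ∀ i, 1 ≤ p i) (hsum : 1 < ∑ i, 1 / p i)
    (hq : (∑ i, 1 / p i - 1) * q = Fintype.card ι) :
    (∫⁻ x, ‖u x‖ₑ ^ q) ^ (∑ i, 1 / p i - 1) ≤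
      (Fintype.card ι : ℝ≥0∞) ^ (Fintype.card ι : ℝ) *
        ∏ i, ENNReal.ofReal (1 + q * (1 - 1 / p i)) *
          (∫⁻ x, ‖fderiv ℝ u x (Pi.single i 1)‖ₑ ^ p i) ^ (1 / p i) := by
  have hn : (1 : ℝ) < Fintype.card ι := one_lt_card_of_one_lt_sum_one_div hp hsum
  have hq₀ : 0 < q := pos_of_sum_one_div_sub_one_mul_eq_card hp hsum hq
  rcases eq_or_ne (∫⁻ x, ‖u x‖ₑ ^ q) 0 with hA₀ | hA₀
  · rw [hA₀, ENNReal.zero_rpow_of_pos (by linarith)]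
    exact zero_le
  have h := ENNReal.rpow_sub_sum_le_of_le_mul_prod hA₀
    (h2u.lintegral_enorm_rpow_ne_top hu.continuous hq₀) (sub_pos.mpr hn)
    (fun i => sub_nonneg.mpr (div_le_one_of_le₀ (hp i) (by linarith [hp i])))
    (h2u.lintegral_enorm_rpow_le_prod hu hp hsum hq hA₀)
  rwa [← ENNReal.rpow_mul, div_mul_cancel₀ _ (sub_ne_zero.mpr hn.ne'), Finset.sum_sub_distrib,
    Finset.sum_const, Finset.card_univ, nsmul_eq_mul, mul_one, sub_sub_sub_cancel_left] at h

end Anisotropic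

theorem integral_norm_rpow_eq_toReal_lintegral {α E : Type*} [MeasurableSpace α] {μ : Measure α}
    [NormedAddCommGroup E] {f : α → E} (hf : AEStronglyMeasurable f μ) {c : ℝ} (hc : 0 ≤ c) :
    ∫ x, ‖f x‖ ^ c ∂μ = (∫⁻ x, ‖f x‖ₑ ^ c ∂μ).toReal := by
  rw [integral_eq_lintegral_of_nonneg_ae (ae_of_all _ fun _ => by positivity)
    (hf.norm.aemeasurable.pow_const c).aestronglyMeasurable]
  congr 1
  refine lintegral_congr fun x => ?_
  rw [← ofReal_norm, ENNReal.ofReal_rpow_of_nonneg (norm_nonneg _) hc]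

section Euclidean

variable {ι : Type*} [Fintype ι]

theorem lintegral_comp_toLp (f : EuclideanSpace ℝ ι → ℝ≥0∞) :
    ∫⁻ y : ι → ℝ, f (WithLp.toLp 2 y) = ∫⁻ x, f x :=
  (PiLp.volume_preserving_toLp ι).lintegral_comp_emb
    (MeasurableEquiv.toLp 2 _).measurableEmbedding f

variable [DecidableEq ι] {F : Type*} [NormedAddCommGroup F]

theorem fderiv_comp_toLp_apply_single [NormedSpace ℝ F] (u : EuclideanSpace ℝ ι → F)
    (y : ι → ℝ) (i : ι) :
    fderiv ℝ (fun y => u (WithLp.toLp 2 y)) y (Pi.single i 1) =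
      fderiv ℝ u (WithLp.toLp 2 y) (EuclideanSpace.single i 1) :=
  congrArg (· (Pi.single i 1)) ((PiLp.continuousLinearEquiv 2 ℝ _).symm.comp_right_fderiv (f := u))

theorem HasCompactSupport.lintegral_enorm_rpow_rpow_le_prod_euclidean [InnerProductSpace ℝ F]
    {u : EuclideanSpace ℝ ι → F} (hu : ContDiff ℝ 1 u) (h2u : HasCompactSupport u) {p : ι → ℝ}
    (hp : ∀ i, 1 ≤ p i) (hsum : 1 < ∑ i, 1 / p i) {q : ℝ}
    (hq : (∑ i, 1 / p i - 1) * q = Fintype.card ι) :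
    (∫⁻ x, ‖u x‖ₑ ^ q) ^ (∑ i, 1 / p i - 1) ≤
      (Fintype.card ι : ℝ≥0∞) ^ (Fintype.card ι : ℝ) *
        ∏ i, ENNReal.ofReal (1 + q * (1 - 1 / p i)) *
          (∫⁻ x, ‖fderiv ℝ u x (EuclideanSpace.single i 1)‖ₑ ^ p i) ^ (1 / p i) := by
  have h := (h2u.comp_isClosedEmbedding (PiLp.homeomorph 2 _).symm.isClosedEmbedding
    ).lintegral_enorm_rpow_rpow_le_prod (hu.comp PiLp.contDiff_toLp) hp hsum hq
  have hD (i : ι) :=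
    lintegral_comp_toLp fun x => ‖fderiv ℝ u x (EuclideanSpace.single i 1)‖ₑ ^ p i
  simpa only [Function.comp_def, fderiv_comp_toLp_apply_single, hD,
    lintegral_comp_toLp fun x => ‖u x‖ₑ ^ q] using h

theorem HasCompactSupport.integral_norm_rpow_rpow_le_prod [InnerProductSpace ℝ F]
    {u : EuclideanSpace ℝ ι → F} (hu : ContDiff ℝ 1 u) (h2u : HasCompactSupport u) {p : ι → ℝ}
    (hp : ∀ i, 1 ≤ p i) (hsum : 1 < ∑ i, 1 / p i) {q : ℝ}
    (hq : (∑ i, 1 / p i - 1) * q = Fintype.card ι) :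
    (∫ x, ‖u x‖ ^ q) ^ (∑ i, 1 / p i - 1) ≤
      ((Fintype.card ι : ℝ) ^ (Fintype.card ι : ℝ) * ∏ i, (1 + q * (1 - 1 / p i))) *
        ∏ i, (∫ x, ‖fderiv ℝ u x (EuclideanSpace.single i 1)‖ ^ p i) ^ (1 / p i) := by
  have hq₀ : 0 < q := pos_of_sum_one_div_sub_one_mul_eq_card hp hsum hq
  have hp₀ (i : ι) : 0 < p i := by linarith [hp i]
  have hD (i : ι) : Continuous fun x => fderiv ℝ u x (EuclideanSpace.single i 1) :=
    (hu.continuous_fderiv one_ne_zero).clm_apply continuous_const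
  have hDint (i : ι) : ∫ x, ‖fderiv ℝ u x (EuclideanSpace.single i 1)‖ ^ p i =
      (∫⁻ x, ‖fderiv ℝ u x (EuclideanSpace.single i 1)‖ₑ ^ p i).toReal :=
    integral_norm_rpow_eq_toReal_lintegral (hD i).aestronglyMeasurable (hp₀ i).le
  have hDfin (i : ι) : ∫⁻ x, ‖fderiv ℝ u x (EuclideanSpace.single i 1)‖ₑ ^ p i ≠ ⊤ :=
    (h2u.fderiv_apply (𝕜 := ℝ) _).lintegral_enorm_rpow_ne_top (hD i) (hp₀ i)
  rw [integral_norm_rpow_eq_toReal_lintegral hu.continuous.aestronglyMeasurable hq₀.le]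
  simp only [hDint, ENNReal.toReal_rpow]
  refine (ENNReal.toReal_mono ?_ (h2u.lintegral_enorm_rpow_rpow_le_prod_euclidean hu hp hsum hq)
    ).trans_eq ?_
  · exact ENNReal.mul_ne_top (by simp) (ENNReal.prod_ne_top fun i _ => ENNReal.mul_ne_top
      ENNReal.ofReal_ne_top (ENNReal.rpow_ne_top_of_nonneg (one_div_nonneg.mpr (hp₀ i).le)
        (hDfin i)))
  · rw [ENNReal.toReal_mul, ENNReal.toReal_prod, mul_assoc, ← Finset.prod_mul_distrib]
    congr 1
    · simp
    · refine Finset.prod_congr rfl fun i _ => ?_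
      rw [ENNReal.toReal_mul, ENNReal.toReal_ofReal
        (zero_le_one.trans (one_le_one_add_mul_one_sub_one_div (hp i) hq₀.le))]

end Euclidean

theorem sub_one_mul_pstar {n : ℕ} {p : Fin n → ℝ} (hsum : 1 < ∑ i, 1 / p i) :
    (∑ i, 1 / p i - 1) * pstar n p = n := by
  have hn : (n : ℝ) ≠ 0 := by
    rintro h
    obtain rfl : n = 0 := by exact_mod_cast h
    simp at hsum
    linarith
  have hs : ∑ i, 1 / p i ≠ 0 := by linarith
  have hs1 : ∑ i, 1 / p i - 1 ≠ 0 := by linarith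
  rw [pstar, pbar]
  field_simp

theorem stmt9_general (n : ℕ) (p : Fin n → ℝ) (hp : ∀ i, 1 ≤ p i)
    (hsum : 1 < ∑ i, 1 / p i) :
    ∃ C : ℝ, 0 < C ∧
      ∀ u : EuclideanSpace ℝ (Fin n) → ℝ,
        ContDiff ℝ (⊤ : ℕ∞) u → HasCompactSupport u →
        (∫ x, |u x| ^ pstar n p) ^ ((n : ℝ) / pstar n p) ≤
          C * ∏ i,
            (∫ x, |fderiv ℝ u x (EuclideanSpace.single i 1)| ^ p i) ^ (1 / p i) := by
  have hq : (∑ i, 1 / p i - 1) * pstar n p = n := sub_one_mul_pstar hsum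
  have hq' : (∑ i, 1 / p i - 1) * pstar n p = Fintype.card (Fin n) := by simpa using hq
  have hq₀ : 0 < pstar n p := pos_of_sum_one_div_sub_one_mul_eq_card hp hsum hq'
  have hn : (1 : ℝ) < n := by simpa using one_lt_card_of_one_lt_sum_one_div hp hsum
  refine ⟨n ^ (n : ℝ) * ∏ i, (1 + pstar n p * (1 - 1 / p i)),
    mul_pos (Real.rpow_pos_of_pos (by linarith) _)
    (Finset.prod_pos fun i _ => one_pos.trans_le (one_le_one_add_mul_one_sub_one_div (hp i)
      hq₀.le)), fun u hu h2u => ?_⟩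
  have h := h2u.integral_norm_rpow_rpow_le_prod (hu.of_le (by exact_mod_cast le_top)) hp hsum hq'
  simp only [Real.norm_eq_abs, Fintype.card_fin] at h
  rwa [div_eq_of_eq_mul hq₀.ne' hq.symm]

/-- **Troisi's anisotropic Sobolev inequality, product form.**
Let `n ≥ 2`, `1 ≤ pᵢ < ∞`, `1/p = (1/n)∑ᵢ 1/pᵢ` with `∑ᵢ 1/pᵢ > 1`, and
`p* = np/(n−p)`. Then there is `C = C(n, p₁,…,pₙ)` such that for all
`u ∈ C_c^∞(ℝⁿ)`:
`(∫ |u|^{p*})^{n/p*} ≤ C ∏ᵢ (∫ |∂u/∂xᵢ|^{pᵢ})^{1/pᵢ}`. -/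
theorem stmt9 (n : ℕ) (hn : 2 ≤ n) (p : Fin n → ℝ) (hp : ∀ i, 1 ≤ p i)
    (hsum : 1 < ∑ i, 1 / p i) :
    ∃ C : ℝ, 0 < C ∧
      ∀ u : EuclideanSpace ℝ (Fin n) → ℝ,
        ContDiff ℝ (⊤ : ℕ∞) u → HasCompactSupport u →
        (∫ x, |u x| ^ pstar n p) ^ ((n : ℝ) / pstar n p) ≤
          C * ∏ i,
            (∫ x, |fderiv ℝ u x (EuclideanSpace.single i 1)| ^ p i) ^ (1 / p i) :=
  stmt9_general n p hp hsum
end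

section
/- (Strong monotonicity of the p-Laplacian vector field, case p ≥ 2.) For every p ≥ 2 there exists a constant α_p > 0 such that for all ξ, ξ' ∈ ℝⁿ: ( |ξ|^{p−2}ξ − |ξ'|^{p−2}ξ' ) · (ξ − ξ') ≥ α_p · |ξ − ξ'|^p, where · denotes the Euclidean inner product on ℝⁿ and |·| the Euclidean norm. -/
/-!
With `s = ‖ξ‖^(p-2)` and `r = ‖ξ'‖^(p-2)` the inner product splits as
`(s + r)/2 · ‖ξ - ξ'‖² + (s - r)/2 · (‖ξ‖² - ‖ξ'‖²)`. The second term is nonnegative because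
`t ↦ t^(p-2)` and `t ↦ t²` are both increasing, and in the first `‖ξ - ξ'‖^(p-2) ≤ 2^(p-2) (s + r)`
since `‖ξ - ξ'‖ ≤ 2 max ‖ξ‖ ‖ξ'‖`. This gives the inequality with `α = 2^(1-p)`.
-/

open Real

theorem norm_sub_rpow_le {E : Type*} [SeminormedAddCommGroup E] {q : ℝ} (hq : 0 ≤ q) (a b : E) :
    ‖a - b‖ ^ q ≤ 2 ^ q * (‖a‖ ^ q + ‖b‖ ^ q) := by
  have hmax : ‖a - b‖ ≤ 2 * max ‖a‖ ‖b‖ :=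
    (norm_sub_le a b).trans (by linarith [le_max_left ‖a‖ ‖b‖, le_max_right ‖a‖ ‖b‖])
  calc ‖a - b‖ ^ q ≤ (2 * max ‖a‖ ‖b‖) ^ q := rpow_le_rpow (norm_nonneg _) hmax hq
    _ = 2 ^ q * max (‖a‖ ^ q) (‖b‖ ^ q) := by
      rw [mul_rpow zero_le_two (le_max_of_le_left (norm_nonneg a)),
        rpow_max (norm_nonneg a) (norm_nonneg b) hq]
    _ ≤ 2 ^ q * (‖a‖ ^ q + ‖b‖ ^ q) := by
      gcongr
      exact max_le_add_of_nonneg (by positivity) (by positivity)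

section InnerProductSpace

variable {E : Type*} [SeminormedAddCommGroup E] [InnerProductSpace ℝ E]

theorem real_inner_smul_sub_smul_sub_eq (s r : ℝ) (a b : E) :
    inner ℝ (s • a - r • b) (a - b) =
      (s + r) / 2 * ‖a - b‖ ^ 2 + (s - r) / 2 * (‖a‖ ^ 2 - ‖b‖ ^ 2) := by
  rw [norm_sub_sq_real]
  simp only [inner_sub_left, inner_sub_right, real_inner_smul_left, real_inner_self_eq_norm_sq,
    real_inner_comm a b]
  ring

theorem half_add_rpow_mul_sq_le_real_inner {q : ℝ} (hq : 0 ≤ q) (a b : E) :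
    (‖a‖ ^ q + ‖b‖ ^ q) / 2 * ‖a - b‖ ^ 2 ≤
      inner ℝ (‖a‖ ^ q • a - ‖b‖ ^ q • b) (a - b) := by
  have hmono : 0 ≤ (‖a‖ ^ q - ‖b‖ ^ q) * (‖a‖ ^ 2 - ‖b‖ ^ 2) :=
    ((monotoneOn_rpow_Ici_of_exponent_nonneg hq).monovaryOn pow_left_monotoneOn).sub_mul_sub_nonneg
      (norm_nonneg b) (norm_nonneg a)
  rw [real_inner_smul_sub_smul_sub_eq]
  linarith

theorem two_rpow_one_sub_mul_norm_sub_rpow_le_real_inner {p : ℝ} (hp : 2 ≤ p) (a b : E) :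
    2 ^ (1 - p) * ‖a - b‖ ^ p ≤
      inner ℝ (‖a‖ ^ (p - 2) • a - ‖b‖ ^ (p - 2) • b) (a - b) := by
  have hq : 0 ≤ p - 2 := by linarith
  have hsplit : ‖a - b‖ ^ p = ‖a - b‖ ^ (p - 2) * ‖a - b‖ ^ 2 := by
    rw [← rpow_natCast, ← rpow_add' (norm_nonneg _) (by norm_num; linarith)]
    norm_num
  have htwo : (2 : ℝ) ^ (1 - p) * 2 ^ (p - 2) = 1 / 2 := by
    rw [← rpow_add two_pos, show 1 - p + (p - 2) = -1 by ring, rpow_neg_one, one_div]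
  calc 2 ^ (1 - p) * ‖a - b‖ ^ p
      ≤ 2 ^ (1 - p) * (2 ^ (p - 2) * (‖a‖ ^ (p - 2) + ‖b‖ ^ (p - 2)) * ‖a - b‖ ^ 2) := by
        rw [hsplit]
        gcongr
        exact norm_sub_rpow_le hq a b
    _ = (‖a‖ ^ (p - 2) + ‖b‖ ^ (p - 2)) / 2 * ‖a - b‖ ^ 2 := by
        rw [← mul_assoc, ← mul_assoc, htwo]
        ring
    _ ≤ inner ℝ (‖a‖ ^ (p - 2) • a - ‖b‖ ^ (p - 2) • b) (a - b) :=
        half_add_rpow_mul_sq_le_real_inner hq a b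

end InnerProductSpace

/-- **strong monotonicity of the p-Laplacian vector field, `p ≥ 2`.**
For every `p ≥ 2` there is `α_p > 0` such that for all `ξ, ξ' ∈ ℝⁿ`:
`(|ξ|^{p−2}ξ − |ξ'|^{p−2}ξ') · (ξ − ξ') ≥ α_p |ξ − ξ'|^p`. -/
theorem stmt13 (n : ℕ) (p : ℝ) (hp : 2 ≤ p) :
    ∃ α : ℝ, 0 < α ∧
      ∀ ξ ξ' : EuclideanSpace ℝ (Fin n),
        α * ‖ξ - ξ'‖ ^ p ≤
          (inner ℝ (‖ξ‖ ^ (p - 2) • ξ - ‖ξ'‖ ^ (p - 2) • ξ') (ξ - ξ') : ℝ) :=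
  ⟨2 ^ (1 - p), rpow_pos_of_pos two_pos _, two_rpow_one_sub_mul_norm_sub_rpow_le_real_inner hp⟩
end

section
/- (Monotonicity of the p-Laplacian vector field, case 1 < p < 2.) For every p with 1 < p < 2 there exists a constant α_p > 0 such that for all ξ, ξ' ∈ ℝⁿ with |ξ| + |ξ'| ≠ 0: ( |ξ|^{p−2}ξ − |ξ'|^{p−2}ξ' ) · (ξ − ξ') ≥ α_p · |ξ − ξ'|² / ( |ξ| + |ξ'| )^{2−p}, where · denotes the Euclidean inner product on ℝⁿ and |·| the Euclidean norm. -/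
/-!
Write `a = ‖ξ‖`, `b = ‖ξ'‖`, `t = ⟪ξ, ξ'⟫` and `s = a + b`. Then
`⟪a^{p-2} ξ - b^{p-2} ξ', ξ - ξ'⟫ = (a^{p-1} - b^{p-1})(a - b) + (a^{p-2} + b^{p-2})(ab - t)` and
`‖ξ - ξ'‖² = (a - b)² + 2(ab - t)`, with `ab - t ≥ 0` by Cauchy–Schwarz. Concavity of `x ↦ x^{p-1}`
bounds the first term below by `(p-1) s^{p-2} (a - b)²`, and `s^{p-2} ≤ min(a^{p-2}, b^{p-2})`
bounds the second below by `2 s^{p-2} (ab - t)`; so `α_p = p - 1` works.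
-/

open Real RealInnerProductSpace

namespace Real

variable {a b q : ℝ}

theorem mul_rpow_sub_one_mul_sub_le_rpow_sub_rpow (hq₀ : 0 ≤ q) (hq₁ : q ≤ 1) (ha : 0 < a)
    (hb : 0 ≤ b) : q * a ^ (q - 1) * (a - b) ≤ a ^ q - b ^ q := by
  have hamgm : b ^ q * a ^ (1 - q) ≤ q * b + (1 - q) * a :=
    geom_mean_le_arith_mean2_weighted hq₀ (by linarith) hb ha.le (by ring)
  have hinv : a ^ (1 - q) * a ^ (q - 1) = 1 := by
    rw [← rpow_add ha]; simp
  have hbound : b ^ q ≤ (q * b + (1 - q) * a) * a ^ (q - 1) := by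
    calc b ^ q = b ^ q * a ^ (1 - q) * a ^ (q - 1) := by rw [mul_assoc, hinv, mul_one]
      _ ≤ (q * b + (1 - q) * a) * a ^ (q - 1) := by gcongr
  have hpow : a ^ q = a ^ (q - 1) * a := by
    rw [← rpow_add_one ha.ne', sub_add_cancel]
  rw [hpow]
  linear_combination hbound

theorem mul_rpow_add_sub_one_mul_sq_le (hq₀ : 0 ≤ q) (hq₁ : q ≤ 1) (ha : 0 ≤ a) (hb : 0 ≤ b) :
    q * (a + b) ^ (q - 1) * (a - b) ^ 2 ≤ (a ^ q - b ^ q) * (a - b) := by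
  wlog hba : b ≤ a generalizing a b
  · have h := this hb ha (le_of_not_ge hba)
    rw [add_comm] at h
    linarith
  rcases ha.eq_or_lt with rfl | ha
  · obtain rfl : b = 0 := le_antisymm hba hb
    simp
  have hmono : (a + b) ^ (q - 1) ≤ a ^ (q - 1) :=
    rpow_le_rpow_of_nonpos ha (le_add_of_nonneg_right hb) (by linarith)
  calc q * (a + b) ^ (q - 1) * (a - b) ^ 2
      ≤ q * a ^ (q - 1) * (a - b) * (a - b) := by
        rw [sq, ← mul_assoc]; gcongr
    _ ≤ (a ^ q - b ^ q) * (a - b) := by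
        exact mul_le_mul_of_nonneg_right
          (mul_rpow_sub_one_mul_sub_le_rpow_sub_rpow hq₀ hq₁ ha hb) (by linarith)

theorem two_mul_rpow_add_le_rpow_add_rpow (ha : 0 < a) (hb : 0 < b) (hq : q ≤ 0) :
    2 * (a + b) ^ q ≤ a ^ q + b ^ q := by
  have h₁ : (a + b) ^ q ≤ a ^ q := rpow_le_rpow_of_nonpos ha (by linarith) hq
  have h₂ : (a + b) ^ q ≤ b ^ q := rpow_le_rpow_of_nonpos hb (by linarith) hq
  linarith

end Real

section InnerProductSpace

variable {E : Type*} [NormedAddCommGroup E] [InnerProductSpace ℝ E]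

theorem inner_rpow_smul_sub_rpow_smul {p : ℝ} (hp : p ≠ 1) (x y : E) :
    ⟪‖x‖ ^ (p - 2) • x - ‖y‖ ^ (p - 2) • y, x - y⟫ =
      (‖x‖ ^ (p - 1) - ‖y‖ ^ (p - 1)) * (‖x‖ - ‖y‖) +
        (‖x‖ ^ (p - 2) + ‖y‖ ^ (p - 2)) * (‖x‖ * ‖y‖ - ⟪x, y⟫) := by
  have hpow : ∀ z : E, ‖z‖ ^ (p - 1) = ‖z‖ ^ (p - 2) * ‖z‖ := fun z => by
    rw [← rpow_add_one' (norm_nonneg z) (by contrapose! hp; linarith)]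
    ring_nf
  rw [hpow, hpow, inner_sub_left, inner_sub_right, inner_sub_right, real_inner_smul_left,
    real_inner_smul_left, real_inner_smul_left, real_inner_smul_left,
    real_inner_self_eq_norm_sq, real_inner_self_eq_norm_sq, real_inner_comm x y]
  ring

theorem sub_one_mul_rpow_mul_norm_sub_sq_le_inner {p : ℝ} (hp₁ : 1 < p) (hp₂ : p ≤ 2) (x y : E) :
    (p - 1) * (‖x‖ + ‖y‖) ^ (p - 2) * ‖x - y‖ ^ 2 ≤
      ⟪‖x‖ ^ (p - 2) • x - ‖y‖ ^ (p - 2) • y, x - y⟫ := by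
  set a := ‖x‖
  set b := ‖y‖
  set t := ⟪x, y⟫
  have ha : 0 ≤ a := norm_nonneg x
  have hb : 0 ≤ b := norm_nonneg y
  have hcs : 0 ≤ a * b - t := sub_nonneg.2 (real_inner_le_norm x y)
  have hdiff : (p - 1) * (a + b) ^ (p - 2) * (a - b) ^ 2 ≤
      (a ^ (p - 1) - b ^ (p - 1)) * (a - b) := by
    have h := mul_rpow_add_sub_one_mul_sq_le (q := p - 1) (by linarith) (by linarith) ha hb
    rwa [show p - 1 - 1 = p - 2 by ring] at h
  have hangle :
      2 * (a + b) ^ (p - 2) * (a * b - t) ≤ (a ^ (p - 2) + b ^ (p - 2)) * (a * b - t) := by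
    rcases eq_or_ne x 0 with rfl | hx
    · simp [a, t]
    rcases eq_or_ne y 0 with rfl | hy
    · simp [b, t]
    exact mul_le_mul_of_nonneg_right (two_mul_rpow_add_le_rpow_add_rpow (norm_pos_iff.2 hx)
      (norm_pos_iff.2 hy) (by linarith)) hcs
  have hangle_nonneg : 0 ≤ 2 * (a + b) ^ (p - 2) * (a * b - t) := by positivity
  rw [inner_rpow_smul_sub_rpow_smul hp₁.ne' x y, norm_sub_sq_real]
  nlinarith

/-- **monotonicity of the p-Laplacian vector field, `1 < p < 2`.**
For every `1 < p < 2` there is `α_p > 0` such that for all `ξ, ξ' ∈ ℝⁿ` with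
`|ξ| + |ξ'| ≠ 0`:
`(|ξ|^{p−2}ξ − |ξ'|^{p−2}ξ') · (ξ − ξ') ≥ α_p |ξ − ξ'|² / (|ξ| + |ξ'|)^{2−p}`
(with the convention `|0|^{p−2}·0 = 0`, which is automatic for `Real.rpow`). -/
theorem stmt14 (n : ℕ) (p : ℝ) (hp1 : 1 < p) (hp2 : p < 2) :
    ∃ α : ℝ, 0 < α ∧
      ∀ ξ ξ' : EuclideanSpace ℝ (Fin n), ‖ξ‖ + ‖ξ'‖ ≠ 0 →
        α * (‖ξ - ξ'‖ ^ (2:ℝ) / (‖ξ‖ + ‖ξ'‖) ^ (2 - p)) ≤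
          (inner ℝ (‖ξ‖ ^ (p - 2) • ξ - ‖ξ'‖ ^ (p - 2) • ξ') (ξ - ξ') : ℝ) := by
  refine ⟨p - 1, by linarith, fun ξ ξ' _ => ?_⟩
  have hdiv : ‖ξ - ξ'‖ ^ (2:ℝ) / (‖ξ‖ + ‖ξ'‖) ^ (2 - p) =
      (‖ξ‖ + ‖ξ'‖) ^ (p - 2) * ‖ξ - ξ'‖ ^ 2 := by
    rw [rpow_two, div_eq_inv_mul, ← rpow_neg (by positivity), neg_sub]
  rw [hdiv, ← mul_assoc]
  exact sub_one_mul_rpow_mul_norm_sub_sq_le_inner hp1 hp2.le ξ ξ'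
end InnerProductSpace
end

section
/- Let Ω ⊂ ℝⁿ be a bounded measurable set, 2 ≤ p < n, and let V : Ω × ℝ → ℝ be a Carathéodory function satisfying the growth condition |V(x,σ)| ≤ c₀|σ|^{m₁} for a.e. x ∈ Ω and all σ ∈ ℝ, where p − 1 ≤ m₁ < (p−1)(1 + 1/(n−p)). Set m₃ = n(p−1)/(n−p). Then there is a constant C > 0, depending only on n, p, m₁, c₀ and |Ω|, such that for every u ∈ L^∞(Ω): ‖V(·, u(·))‖_{L^{n,1}(Ω)}^{1/(p−1)} ≤ C · ‖u‖_{L^∞} · ‖u‖_{L^{m₃,1}(Ω)}^{(m₁+1−p)/(p−1)}. -/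
open MeasureTheory Set Filter
open scoped ENNReal Topology

/-- The decreasing rearrangement of `|f|` with respect to the measure `μ`:
`f_*(s) = inf { t ≥ 0 : μ{|f| > t} ≤ s }`. -/
noncomputable def rearr {Ω : Type*} [MeasurableSpace Ω] (μ : Measure Ω)
    (f : Ω → ℝ) (s : ℝ) : ℝ :=
  sInf {t : ℝ | 0 ≤ t ∧ (μ {x | t < |f x|}).toReal ≤ s}

/-- The Lorentz norm `‖f‖_{L^{q,1}(μ)} = ∫₀^{μ(Ω)} t^{1/q} f_*(t) dt/t`. -/
noncomputable def lorentzOneNorm {Ω : Type*} [MeasurableSpace Ω] (μ : Measure Ω)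
    (q : ℝ) (f : Ω → ℝ) : ℝ≥0∞ :=
  ∫⁻ t in Ioo (0:ℝ) (μ univ).toReal, ENNReal.ofReal (t ^ (1 / q - 1) * rearr μ f t)

/-!
The growth bound passes to rearrangements: `g_* ≤ c₀ (u_*)^{m₁}` for `g = V(·, u)`. Split
`(u_*)^{m₁} = (u_*)^{p-1} (u_*)^{θ}` with `θ = m₁ + 1 - p ≥ 0`. The first factor is at most
`‖u‖_∞^{p-1}`; for the second, monotonicity of `u_*` gives
`m₃ t^{1/m₃} u_*(t) = ∫₀ᵗ s^{1/m₃-1} u_*(t) ds ≤ ‖u‖_{L^{m₃,1}}`. Hence the integrand of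
`‖g‖_{L^{n,1}}` is `O(t^{κ-1})` with `κ = 1/n - θ/m₃`, and `κ > 0` is exactly the upper bound
on `m₁`.
-/

section Rearrangement

variable {Ω : Type*} [MeasurableSpace Ω] {μ : Measure Ω} {f g : Ω → ℝ} {M a s : ℝ}

lemma ae_abs_le_toReal_eLpNorm_top (hf : eLpNorm f ⊤ μ ≠ ⊤) :
    ∀ᵐ x ∂μ, |f x| ≤ (eLpNorm f ⊤ μ).toReal := by
  filter_upwards [ae_le_eLpNormEssSup (f := f) (μ := μ)] with x hx
  rw [eLpNorm_exponent_top] at hf ⊢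
  simpa [Real.norm_eq_abs] using ENNReal.toReal_mono hf hx

lemma measure_lt_abs_eq_zero_of_ae_abs_le (hf : ∀ᵐ x ∂μ, |f x| ≤ M) :
    μ {x | M < |f x|} = 0 := by
  rw [ae_iff] at hf
  simpa only [not_le] using hf

lemma rearr_nonneg (s : ℝ) : 0 ≤ rearr μ f s :=
  Real.sInf_nonneg fun _ ht => ht.1

lemma rearr_le_of_measure_le (ha : 0 ≤ a) (h : (μ {x | a < |f x|}).toReal ≤ s) :
    rearr μ f s ≤ a :=
  csInf_le ⟨0, fun _ ht => ht.1⟩ ⟨ha, h⟩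

lemma rearr_le_of_ae_abs_le (hM : 0 ≤ M) (hf : ∀ᵐ x ∂μ, |f x| ≤ M) (hs : 0 ≤ s) :
    rearr μ f s ≤ M :=
  rearr_le_of_measure_le hM (by simp [measure_lt_abs_eq_zero_of_ae_abs_le hf, hs])

lemma rearr_antitoneOn (hM : 0 ≤ M) (hf : ∀ᵐ x ∂μ, |f x| ≤ M) :
    AntitoneOn (rearr μ f) (Ici 0) := fun s hs _ _ hst =>
  csInf_le_csInf ⟨0, fun _ ht => ht.1⟩
    ⟨M, hM, by simp [measure_lt_abs_eq_zero_of_ae_abs_le hf, show (0 : ℝ) ≤ s from hs]⟩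
    fun _ ht => ⟨ht.1, ht.2.trans hst⟩

lemma rearr_le_mul_rpow_of_ae_abs_le [IsFiniteMeasure μ] {c m : ℝ} (hc : 0 ≤ c) (hm : 0 ≤ m)
    (hg : ∀ᵐ x ∂μ, |g x| ≤ c * |f x| ^ m) (hM : 0 ≤ M) (hf : ∀ᵐ x ∂μ, |f x| ≤ M)
    (hs : 0 ≤ s) : rearr μ g s ≤ c * rearr μ f s ^ m := by
  have hne : {t : ℝ | 0 ≤ t ∧ (μ {x | t < |f x|}).toReal ≤ s}.Nonempty :=
    ⟨M, hM, by simp [measure_lt_abs_eq_zero_of_ae_abs_le hf, hs]⟩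
  have hcont : ContinuousAt (fun b : ℝ => c * b ^ m) (rearr μ f s) :=
    continuousAt_const.mul (Real.continuousAt_rpow_const _ _ (Or.inr hm))
  -- Instead of showing that the infimum defining `f_*(s)` is attained, compare with every
  -- `b > f_*(s)` and let `b ↓ f_*(s)`.
  refine ge_of_tendsto (x := 𝓝[>] rearr μ f s) hcont.continuousWithinAt.tendsto ?_
  filter_upwards [self_mem_nhdsWithin] with b hb
  obtain ⟨a, ⟨ha, haμ⟩, hab⟩ := exists_lt_of_csInf_lt hne hb
  have hsub : {x | c * a ^ m < |g x|} ≤ᵐ[μ] {x | a < |f x|} := by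
    filter_upwards [hg] with x hx hlt
    show a < |f x|
    by_contra! hle
    exact (hlt.trans_le (hx.trans (by gcongr))).false
  calc rearr μ g s ≤ c * a ^ m :=
        rearr_le_of_measure_le (by positivity)
          ((ENNReal.toReal_mono (measure_ne_top _ _) (measure_mono_ae hsub)).trans haμ)
    _ ≤ c * b ^ m := by gcongr

end Rearrangement

lemma lintegral_Ioo_rpow {e t : ℝ} (he : -1 < e) (ht : 0 ≤ t) :
    ∫⁻ s in Ioo (0 : ℝ) t, ENNReal.ofReal (s ^ e) = ENNReal.ofReal (t ^ (e + 1) / (e + 1)) := by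
  have hint : IntegrableOn (fun s : ℝ => s ^ e) (Ioo 0 t) := by
    have := intervalIntegral.intervalIntegrable_rpow' (a := 0) (b := t) he
    rw [intervalIntegrable_iff, uIoc_of_le ht] at this
    exact this.mono_set Ioo_subset_Ioc_self
  have hnonneg : 0 ≤ᵐ[volume.restrict (Ioo (0 : ℝ) t)] fun s : ℝ => s ^ e :=
    (ae_restrict_iff' measurableSet_Ioo).2 (ae_of_all _ fun s hs => Real.rpow_nonneg hs.1.le _)
  rw [← ofReal_integral_eq_lintegral_ofReal hint hnonneg, ← integral_Ioc_eq_integral_Ioo,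
    ← intervalIntegral.integral_of_le ht, integral_rpow (Or.inl he),
    Real.zero_rpow (by linarith), sub_zero]

section Lorentz

variable {Ω : Type*} [MeasurableSpace Ω] {μ : Measure Ω} {f g : Ω → ℝ} {M q t : ℝ}

lemma lorentzOneNorm_le_of_le_rpow {c κ : ℝ} (hc : 0 ≤ c) (hκ : 0 < κ)
    (h : ∀ t ∈ Ioo 0 (μ univ).toReal, t ^ (1 / q - 1) * rearr μ f t ≤ c * t ^ (κ - 1)) :
    lorentzOneNorm μ q f ≤ ENNReal.ofReal (c * ((μ univ).toReal ^ κ / κ)) := by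
  calc lorentzOneNorm μ q f
      ≤ ∫⁻ t in Ioo 0 (μ univ).toReal, ENNReal.ofReal c * ENNReal.ofReal (t ^ (κ - 1)) :=
        setLIntegral_mono' measurableSet_Ioo fun t ht => by
          rw [← ENNReal.ofReal_mul hc]
          exact ENNReal.ofReal_le_ofReal (h t ht)
    _ = ENNReal.ofReal (c * ((μ univ).toReal ^ κ / κ)) := by
        rw [lintegral_const_mul' _ _ ENNReal.ofReal_ne_top,
          lintegral_Ioo_rpow (by linarith) ENNReal.toReal_nonneg, sub_add_cancel,
          ENNReal.ofReal_mul hc]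

lemma lorentzOneNorm_ne_top (hq : 0 < q) (hM : 0 ≤ M) (hf : ∀ᵐ x ∂μ, |f x| ≤ M) :
    lorentzOneNorm μ q f ≠ ⊤ :=
  ne_top_of_le_ne_top ENNReal.ofReal_ne_top <|
    lorentzOneNorm_le_of_le_rpow (κ := 1 / q) hM (by positivity) fun t ht => by
      rw [mul_comm M]
      exact mul_le_mul_of_nonneg_left (rearr_le_of_ae_abs_le hM hf ht.1.le)
        (Real.rpow_nonneg ht.1.le _)

lemma ofReal_rpow_mul_rearr_le_lorentzOneNorm (hq : 0 < q) (hM : 0 ≤ M)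
    (hf : ∀ᵐ x ∂μ, |f x| ≤ M) (ht : t ∈ Ioo 0 (μ univ).toReal) :
    ENNReal.ofReal (q * t ^ (1 / q) * rearr μ f t) ≤ lorentzOneNorm μ q f := by
  have he : -1 < 1 / q - 1 := by linarith [one_div_pos.2 hq]
  calc ENNReal.ofReal (q * t ^ (1 / q) * rearr μ f t)
      = (∫⁻ s in Ioo 0 t, ENNReal.ofReal (s ^ (1 / q - 1))) * ENNReal.ofReal (rearr μ f t) := by
        rw [lintegral_Ioo_rpow he ht.1.le, sub_add_cancel,
          ← ENNReal.ofReal_mul (div_nonneg (Real.rpow_nonneg ht.1.le _) (by positivity))]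
        congr 1
        field_simp
    _ = ∫⁻ s in Ioo 0 t, ENNReal.ofReal (s ^ (1 / q - 1)) * ENNReal.ofReal (rearr μ f t) :=
        (lintegral_mul_const' _ _ ENNReal.ofReal_ne_top).symm
    _ ≤ ∫⁻ s in Ioo 0 t, ENNReal.ofReal (s ^ (1 / q - 1) * rearr μ f s) :=
        setLIntegral_mono' measurableSet_Ioo fun s hs => by
          rw [← ENNReal.ofReal_mul (Real.rpow_nonneg hs.1.le _)]
          exact ENNReal.ofReal_le_ofReal <| mul_le_mul_of_nonneg_left
            (rearr_antitoneOn hM hf (mem_Ici.2 hs.1.le) (mem_Ici.2 ht.1.le) hs.2.le)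
            (Real.rpow_nonneg hs.1.le _)
    _ ≤ lorentzOneNorm μ q f := lintegral_mono_set (Ioo_subset_Ioo_right ht.2.le)

lemma rearr_le_lorentzOneNorm_mul_rpow (hq : 0 < q) (hM : 0 ≤ M) (hf : ∀ᵐ x ∂μ, |f x| ≤ M)
    (ht : t ∈ Ioo 0 (μ univ).toReal) :
    rearr μ f t ≤ (lorentzOneNorm μ q f).toReal / q * t ^ (-(1 / q)) := by
  have htq : 0 < q * t ^ (1 / q) := mul_pos hq (Real.rpow_pos_of_pos ht.1 _)
  have h := (ENNReal.ofReal_le_iff_le_toReal (lorentzOneNorm_ne_top hq hM hf)).1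
    (ofReal_rpow_mul_rearr_le_lorentzOneNorm hq hM hf ht)
  rw [Real.rpow_neg ht.1.le, ← div_eq_mul_inv, div_div, le_div_iff₀ htq]
  linarith

lemma rpow_mul_rearr_le_of_ae_abs_le [IsFiniteMeasure μ] {c α θ q' : ℝ} (hc : 0 ≤ c)
    (hα : 0 < α) (hθ : 0 ≤ θ) (hq : 0 < q) (hM : 0 ≤ M) (hf : ∀ᵐ x ∂μ, |f x| ≤ M)
    (hg : ∀ᵐ x ∂μ, |g x| ≤ c * |f x| ^ (α + θ)) (ht : t ∈ Ioo 0 (μ univ).toReal) :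
    t ^ (1 / q' - 1) * rearr μ g t ≤
      c * M ^ α * ((lorentzOneNorm μ q f).toReal / q) ^ θ * t ^ (1 / q' - θ / q - 1) := by
  set D := (lorentzOneNorm μ q f).toReal / q
  have hD : 0 ≤ D := div_nonneg ENNReal.toReal_nonneg hq.le
  have hf_t := rearr_nonneg (μ := μ) (f := f) t
  have hα_part : rearr μ f t ^ α ≤ M ^ α :=
    Real.rpow_le_rpow hf_t (rearr_le_of_ae_abs_le hM hf ht.1.le) hα.le
  have hθ_part : rearr μ f t ^ θ ≤ D ^ θ * t ^ (-(1 / q) * θ) := by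
    calc rearr μ f t ^ θ ≤ (D * t ^ (-(1 / q))) ^ θ :=
          Real.rpow_le_rpow hf_t (rearr_le_lorentzOneNorm_mul_rpow hq hM hf ht) hθ
      _ = D ^ θ * t ^ (-(1 / q) * θ) := by
          rw [Real.mul_rpow hD (Real.rpow_nonneg ht.1.le _), ← Real.rpow_mul ht.1.le]
  calc t ^ (1 / q' - 1) * rearr μ g t
      ≤ t ^ (1 / q' - 1) * (c * (rearr μ f t ^ α * rearr μ f t ^ θ)) := by
        rw [← Real.rpow_add' hf_t (by linarith)]
        exact mul_le_mul_of_nonneg_left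
          (rearr_le_mul_rpow_of_ae_abs_le hc (by linarith) hg hM hf ht.1.le)
          (Real.rpow_nonneg ht.1.le _)
    _ ≤ t ^ (1 / q' - 1) * (c * (M ^ α * (D ^ θ * t ^ (-(1 / q) * θ)))) := by
        gcongr
        exact Real.rpow_nonneg ht.1.le _
    _ = c * M ^ α * D ^ θ * (t ^ (1 / q' - 1) * t ^ (-(1 / q) * θ)) := by ring
    _ = c * M ^ α * D ^ θ * t ^ (1 / q' - θ / q - 1) := by
        rw [← Real.rpow_add ht.1]
        ring_nf

theorem lorentzOneNorm_rpow_le_of_ae_abs_le_mul_rpow [IsFiniteMeasure μ] {c α θ q' : ℝ}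
    (hc : 0 ≤ c) (hα : 0 < α) (hθ : 0 ≤ θ) (hq : 0 < q) (hκ : 0 < 1 / q' - θ / q)
    (hf : eLpNorm f ⊤ μ ≠ ⊤) (hg : ∀ᵐ x ∂μ, |g x| ≤ c * |f x| ^ (α + θ)) :
    lorentzOneNorm μ q' g ^ (1 / α) ≤
      ENNReal.ofReal ((c * ((μ univ).toReal ^ (1 / q' - θ / q) / (1 / q' - θ / q)) / q ^ θ)
        ^ (1 / α)) * eLpNorm f ⊤ μ * lorentzOneNorm μ q f ^ (θ / α) := by
  set K := (μ univ).toReal ^ (1 / q' - θ / q) / (1 / q' - θ / q)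
  set M := (eLpNorm f ⊤ μ).toReal
  set D := (lorentzOneNorm μ q f).toReal
  have hM : 0 ≤ M := ENNReal.toReal_nonneg
  have hD : 0 ≤ D := ENNReal.toReal_nonneg
  have hK : 0 ≤ K := div_nonneg (Real.rpow_nonneg ENNReal.toReal_nonneg _) hκ.le
  have hfM := ae_abs_le_toReal_eLpNorm_top hf
  have hcK : 0 ≤ c * K / q ^ θ := by positivity
  have hbound : lorentzOneNorm μ q' g ≤ ENNReal.ofReal (c * M ^ α * (D / q) ^ θ * K) :=
    lorentzOneNorm_le_of_le_rpow (by positivity) hκ fun t ht =>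
      rpow_mul_rearr_le_of_ae_abs_le hc hα hθ hq hM hfM hg ht
  have hsplit : (c * M ^ α * (D / q) ^ θ * K) ^ (1 / α) =
      (c * K / q ^ θ) ^ (1 / α) * M * D ^ (θ / α) := by
    have hregroup : c * M ^ α * (D / q) ^ θ * K = c * K / q ^ θ * (M ^ α * D ^ θ) := by
      rw [Real.div_rpow hD hq.le]
      ring
    rw [hregroup, Real.mul_rpow hcK (by positivity), Real.mul_rpow (by positivity) (by positivity),
      ← Real.rpow_mul hM, ← Real.rpow_mul hD, mul_one_div_cancel hα.ne', Real.rpow_one,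
      mul_one_div, mul_assoc]
  calc lorentzOneNorm μ q' g ^ (1 / α)
      ≤ ENNReal.ofReal (c * M ^ α * (D / q) ^ θ * K) ^ (1 / α) := by gcongr
    _ = ENNReal.ofReal ((c * K / q ^ θ) ^ (1 / α) * M * D ^ (θ / α)) := by
        rw [ENNReal.ofReal_rpow_of_nonneg (by positivity) (by positivity), hsplit]
    _ = _ := by
        rw [ENNReal.ofReal_mul (by positivity), ENNReal.ofReal_mul (by positivity),
          ← ENNReal.ofReal_rpow_of_nonneg hD (by positivity), ENNReal.ofReal_toReal hf,
          ENNReal.ofReal_toReal (lorentzOneNorm_ne_top hq hM hfM)]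

end Lorentz

theorem stmt15_general (n : ℕ) (p m1 c0 : ℝ)
    (hp2 : 2 ≤ p) (hpn : p < n) (hc0 : 0 < c0)
    (hm1l : p - 1 ≤ m1) (hm1u : m1 < (p - 1) * (1 + 1 / (n - p)))
    (W : ℝ≥0∞) (hW : W ≠ ⊤) :
    ∃ C : ℝ, 0 < C ∧
      ∀ Ω : Set (EuclideanSpace ℝ (Fin n)),
        MeasurableSet Ω → Bornology.IsBounded Ω → volume Ω = W →
      ∀ V : EuclideanSpace ℝ (Fin n) → ℝ → ℝ,
        (∀ σ : ℝ, Measurable fun x => V x σ) →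
        (∀ᵐ x ∂volume.restrict Ω, Continuous (V x)) →
        (∀ᵐ x ∂volume.restrict Ω, ∀ σ : ℝ, |V x σ| ≤ c0 * |σ| ^ m1) →
      ∀ u : EuclideanSpace ℝ (Fin n) → ℝ, Measurable u →
        eLpNorm u ⊤ (volume.restrict Ω) < ⊤ →
        lorentzOneNorm (volume.restrict Ω) n (fun x => V x (u x)) ^ (1 / (p - 1)) ≤
          ENNReal.ofReal C * eLpNorm u ⊤ (volume.restrict Ω) *
            lorentzOneNorm (volume.restrict Ω) ((n : ℝ) * (p - 1) / (n - p)) u ^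
              ((m1 + 1 - p) / (p - 1)) := by
  have hp1 : 0 < p - 1 := by linarith
  have hnp : 0 < (n : ℝ) - p := by linarith
  have hn : 0 < (n : ℝ) := by linarith
  have hκ : 0 < 1 / (n : ℝ) - (m1 + 1 - p) / ((n : ℝ) * (p - 1) / (n - p)) := by
    have h : (m1 + 1 - p) * (n - p) < p - 1 := by
      rw [mul_add, mul_one, ← sub_lt_iff_lt_add', mul_one_div, lt_div_iff₀ hnp] at hm1u
      linarith
    rw [sub_pos, div_div_eq_mul_div, div_lt_div_iff₀ (by positivity) hn]
    nlinarith
  set m3 : ℝ := n * (p - 1) / (n - p)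
  have hm3 : 0 < m3 := by positivity
  set κ := 1 / (n : ℝ) - (m1 + 1 - p) / m3
  refine ⟨max ((c0 * (W.toReal ^ κ / κ) / m3 ^ (m1 + 1 - p)) ^ (1 / (p - 1))) 1,
    by positivity, ?_⟩
  intro Ω _ _ hΩ V _ _ hV u _ hu
  have : IsFiniteMeasure (volume.restrict Ω) := ⟨by simp [hΩ, hW.lt_top]⟩
  have hVu : ∀ᵐ x ∂volume.restrict Ω, |V x (u x)| ≤ c0 * |u x| ^ ((p - 1) + (m1 + 1 - p)) := by
    filter_upwards [hV] with x hx
    rw [show p - 1 + (m1 + 1 - p) = m1 by ring]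
    exact hx (u x)
  calc _ ≤ _ := lorentzOneNorm_rpow_le_of_ae_abs_le_mul_rpow hc0.le hp1 (by linarith) hm3 hκ
          hu.ne hVu
    _ ≤ _ := by
        simp only [Measure.restrict_apply_univ, hΩ]
        gcongr
        exact le_max_left _ _

/-- Let `Ω ⊂ ℝⁿ` be a bounded measurable set, `2 ≤ p < n`, and let
`V : Ω × ℝ → ℝ` be a Carathéodory function with `|V(x,σ)| ≤ c₀|σ|^{m₁}`,
`p − 1 ≤ m₁ < (p−1)(1 + 1/(n−p))`. Set `m₃ = n(p−1)/(n−p)`. Then there is `C > 0`,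
depending only on `n, p, m₁, c₀` and `|Ω|`, such that for every `u ∈ L^∞(Ω)`:
`‖V(·,u(·))‖_{L^{n,1}}^{1/(p−1)} ≤ C ‖u‖_∞ ‖u‖_{L^{m₃,1}}^{(m₁+1−p)/(p−1)}`. -/
theorem stmt15 (n : ℕ) (hn : 2 ≤ n) (p m1 c0 : ℝ)
    (hp2 : 2 ≤ p) (hpn : p < n) (hc0 : 0 < c0)
    (hm1l : p - 1 ≤ m1) (hm1u : m1 < (p - 1) * (1 + 1 / (n - p)))
    (W : ℝ≥0∞) (hW : W ≠ ⊤) :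
    ∃ C : ℝ, 0 < C ∧
      ∀ Ω : Set (EuclideanSpace ℝ (Fin n)),
        MeasurableSet Ω → Bornology.IsBounded Ω → volume Ω = W →
      ∀ V : EuclideanSpace ℝ (Fin n) → ℝ → ℝ,
        (∀ σ : ℝ, Measurable fun x => V x σ) →
        (∀ᵐ x ∂volume.restrict Ω, Continuous (V x)) →
        (∀ᵐ x ∂volume.restrict Ω, ∀ σ : ℝ, |V x σ| ≤ c0 * |σ| ^ m1) →
      ∀ u : EuclideanSpace ℝ (Fin n) → ℝ, Measurable u →
        eLpNorm u ⊤ (volume.restrict Ω) < ⊤ →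
        lorentzOneNorm (volume.restrict Ω) n (fun x => V x (u x)) ^ (1 / (p - 1)) ≤
          ENNReal.ofReal C * eLpNorm u ⊤ (volume.restrict Ω) *
            lorentzOneNorm (volume.restrict Ω) ((n : ℝ) * (p - 1) / (n - p)) u ^
              ((m1 + 1 - p) / (p - 1)) :=
  stmt15_general n p m1 c0 hp2 hpn hc0 hm1l hm1u W hW
end

section
/- Let Ω ⊂ ℝⁿ be a bounded measurable set, n ≥ 2, and let p₁, …, pₙ ∈ (1, ∞) with 1/p = (1/n)∑_{i=1}^n 1/pᵢ, ∑_{i=1}^n 1/pᵢ > 1, p* = np/(n−p), p' = p/(p−1), n' = n/(n−1). Let u : Ω → ℝ be measurable with a.e.-defined measurable partial derivatives ∂u/∂xᵢ (so that ∂(T_k u)/∂xᵢ = (∂u/∂xᵢ)·1_{{|u|<k}}), and let F > 0 be a constant (in the application F = ‖f‖_{L¹} for the datum f of the anisotropic equation). Assume: (a) for every k > 0, ∑_{i=1}^n ∫_{{|u|<k}} |∂u/∂xᵢ|^{pᵢ} dx ≤ k·F, and (b) the anisotropic Poincaré–Sobolev inequality for the truncations: ( ∫_Ω |T_k(u)|^{p*}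 dx )^{p/p*} ≤ C_S · ∑_{i=1}^n ∫_{{|u|<k}} |∂u/∂xᵢ|^{pᵢ} dx for all k > 0. Then there is a constant c > 0 depending only on n, p₁,…,pₙ and C_S such that: (1) meas{ |u| > k } ≤ c·F^{p*/p}·k^{−p*/p'} for all k > 0; and (2) for each i = 1, …, n, sup_{λ>0} λ · ( meas{ |∂u/∂xᵢ| > λ } )^{p'/(n' pᵢ)} ≤ c·F^{p'/pᵢ}, i.e. ∂u/∂xᵢ belongs to the Marcinkiewicz space L^{n'pᵢ/p', ∞}(Ω) with ‖∂u/∂xᵢ‖_{L^{n'pᵢ/p', ∞}} ≤ c·F^{p'/pᵢ}. -/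
/-! On `{|u| > k}` the truncation `T_k u` has modulus `k`, so Chebyshev's inequality, (b) and
(a) give `(k^{p*} meas{|u| > k})^{p/p*} ≤ C_S k F`, which is (1). For (2), split
`{|∂ᵢu| > λ}` into its parts where `|u| > k` and where `|u| < 2k`: the first is controlled
by (1), the second by Chebyshev and (a), which give `2kF/λ^{pᵢ}`. Choosing `k` so that the
two bounds agree yields the weak-type estimate. -/

open MeasureTheory Set
open scoped ENNReal

/-- Truncation at level `k`: `Tk k σ = max (−k) (min k σ)`. -/
def Tk (k σ : ℝ) : ℝ := max (-k) (min k σ)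

lemma abs_Tk_of_le_abs {k σ : ℝ} (hk : 0 ≤ k) (h : k ≤ |σ|) : |Tk k σ| = k := by
  unfold Tk
  rcases le_abs.mp h with h | h
  · rw [min_eq_left h, max_eq_right (by linarith), abs_of_nonneg hk]
  · rw [min_eq_right (by linarith), max_eq_left (by linarith), abs_neg, abs_of_nonneg hk]

lemma le_ofReal_div_of_ofReal_mul_le {V : ℝ≥0∞} {a b : ℝ} (ha : 0 < a)
    (h : ENNReal.ofReal a * V ≤ ENNReal.ofReal b) : V ≤ ENNReal.ofReal (b / a) := by
  rwa [ENNReal.ofReal_div_of_pos ha, ENNReal.le_div_iff_mul_le (.inl (by simpa using ha))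
    (.inl ENNReal.ofReal_ne_top), mul_comm]

lemma le_of_forall_le_mul_rpow_neg_add_mul {V : ℝ≥0∞} {A B τ : ℝ} (hA : 0 < A) (hB : 0 < B)
    (hτ : τ + 1 ≠ 0) (h : ∀ k : ℝ, 0 < k → V ≤ ENNReal.ofReal (A * k ^ (-τ) + B * k)) :
    V ≤ ENNReal.ofReal (2 * (A ^ (τ + 1)⁻¹ * B ^ (τ / (τ + 1)))) := by
  convert h ((A / B) ^ (τ + 1)⁻¹) (by positivity) using 2
  obtain ⟨a, rfl⟩ : ∃ a, Real.exp a = A := ⟨_, Real.exp_log hA⟩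
  obtain ⟨b, rfl⟩ : ∃ b, Real.exp b = B := ⟨_, Real.exp_log hB⟩
  simp only [← Real.exp_sub, ← Real.exp_mul, ← Real.exp_add]
  rw [two_mul]
  congr 2 <;> field_simp <;> ring

section Measure

variable {α : Type*} [MeasurableSpace α] {μ : Measure α}

lemma mul_measure_le_setLIntegral {A S : Set α} {f : α → ℝ≥0∞} {c : ℝ≥0∞}
    (hA : MeasurableSet A) (hAS : A ⊆ S) (hf : ∀ x ∈ A, c ≤ f x) :
    c * μ A ≤ ∫⁻ x in S, f x ∂μ :=
  calc c * μ A = ∫⁻ _ in A, c ∂μ := (setLIntegral_const _ _).symm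
    _ ≤ ∫⁻ x in A, f x ∂μ := setLIntegral_mono' hA hf
    _ ≤ _ := lintegral_mono_set hAS

lemma measure_lt_abs_le_of_lintegral_Tk_rpow_le {Ω : Set α} {u : α → ℝ}
    (hΩ : MeasurableSet Ω) (hu : Measurable u) {q r C k : ℝ} (hr : 0 < r) (hC : 0 ≤ C)
    (hk : 0 < k)
    (h : (∫⁻ x in Ω, ENNReal.ofReal (|Tk k (u x)| ^ q) ∂μ) ^ r ≤ ENNReal.ofReal (C * k)) :
    μ (Ω ∩ {x | k < |u x|}) ≤ ENNReal.ofReal (C ^ r⁻¹ * k ^ (r⁻¹ - q)) := by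
  have hmarkov : ENNReal.ofReal (k ^ q) * μ (Ω ∩ {x | k < |u x|}) ≤
      ∫⁻ x in Ω, ENNReal.ofReal (|Tk k (u x)| ^ q) ∂μ :=
    mul_measure_le_setLIntegral (hΩ.inter (measurableSet_lt measurable_const hu.abs))
      inter_subset_left fun x hx => by rw [abs_Tk_of_le_abs hk.le hx.2.le]
  have hI := (ENNReal.le_rpow_inv_iff hr).2 h
  rw [ENNReal.ofReal_rpow_of_nonneg (by positivity) (by positivity)] at hI
  refine (le_ofReal_div_of_ofReal_mul_le (by positivity) (hmarkov.trans hI)).trans_eq ?_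
  rw [Real.mul_rpow hC hk.le, Real.rpow_sub hk, mul_div_assoc]

lemma measure_lt_abs_le_add {Ω : Set α} {u g : α → ℝ} (hΩ : MeasurableSet Ω)
    (hu : Measurable u) (hg : Measurable g) {k k' lam q M : ℝ} (hkk' : k < k')
    (hlam : 0 < lam) (hq : 0 ≤ q)
    (hM : ∫⁻ x in Ω ∩ {x | |u x| < k'}, ENNReal.ofReal (|g x| ^ q) ∂μ ≤ ENNReal.ofReal M) :
    μ (Ω ∩ {x | lam < |g x|}) ≤ μ (Ω ∩ {x | k < |u x|}) + ENNReal.ofReal (M / lam ^ q) := by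
  set S := Ω ∩ {x | |u x| < k'} ∩ {x | lam < |g x|}
  have hsplit : Ω ∩ {x | lam < |g x|} ⊆ (Ω ∩ {x | k < |u x|}) ∪ S := by
    rintro x ⟨hxΩ, hxg⟩
    rcases lt_or_ge k |u x| with hxu | hxu
    · exact .inl ⟨hxΩ, hxu⟩
    · exact .inr ⟨⟨hxΩ, hxu.trans_lt hkk'⟩, hxg⟩
  have hmarkov : ENNReal.ofReal (lam ^ q) * μ S ≤ ENNReal.ofReal M :=
    (mul_measure_le_setLIntegral
      ((hΩ.inter (measurableSet_lt hu.abs measurable_const)).inter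
        (measurableSet_lt measurable_const hg.abs))
      inter_subset_left fun x hx =>
        ENNReal.ofReal_le_ofReal (Real.rpow_le_rpow hlam.le hx.2.le hq)).trans hM
  calc μ (Ω ∩ {x | lam < |g x|}) ≤ μ (Ω ∩ {x | k < |u x|}) + μ S :=
        (measure_mono hsplit).trans (measure_union_le _ _)
    _ ≤ _ := add_le_add le_rfl (le_ofReal_div_of_ofReal_mul_le (by positivity) hmarkov)

lemma ofReal_mul_measure_lt_abs_rpow_le {Ω : Set α} {u g : α → ℝ} (hΩ : MeasurableSet Ω)
    (hu : Measurable u) (hg : Measurable g) {C F σ τ q lam : ℝ} (hC : 0 < C) (hF : 0 < F)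
    (hτ : 0 < τ) (hq : 0 < q) (hlam : 0 < lam)
    (hlevel : ∀ k, 0 < k → μ (Ω ∩ {x | k < |u x|}) ≤ ENNReal.ofReal ((C * F) ^ σ * k ^ (-τ)))
    (henergy : ∀ k, 0 < k →
      ∫⁻ x in Ω ∩ {x | |u x| < k}, ENNReal.ofReal (|g x| ^ q) ∂μ ≤ ENNReal.ofReal (k * F)) :
    ENNReal.ofReal lam * μ (Ω ∩ {x | lam < |g x|}) ^ ((τ + 1) / (τ * q)) ≤
      ENNReal.ofReal (2 ^ ((τ + 1) / (τ * q) + q⁻¹) * C ^ (σ / (τ * q)) *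
        F ^ ((σ / τ + 1) / q)) := by
  have hV : μ (Ω ∩ {x | lam < |g x|}) ≤ ENNReal.ofReal
      (2 * (((C * F) ^ σ) ^ (τ + 1)⁻¹ * (2 * F / lam ^ q) ^ (τ / (τ + 1)))) := by
    refine le_of_forall_le_mul_rpow_neg_add_mul (by positivity) (by positivity) (by linarith)
      fun k hk => ?_
    refine (measure_lt_abs_le_add hΩ hu hg (by linarith : k < 2 * k) hlam hq.le
      (henergy (2 * k) (by positivity))).trans ?_
    rw [ENNReal.ofReal_add (by positivity) (by positivity)]
    gcongr
    · exact hlevel k hk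
    · exact le_of_eq (by ring)
  calc _ ≤ ENNReal.ofReal lam * ENNReal.ofReal
        ((2 * (((C * F) ^ σ) ^ (τ + 1)⁻¹ * (2 * F / lam ^ q) ^ (τ / (τ + 1)))) ^
          ((τ + 1) / (τ * q))) := by
        rw [← ENNReal.ofReal_rpow_of_nonneg (by positivity) (by positivity)]
        gcongr
    _ = _ := by
      rw [← ENNReal.ofReal_mul hlam.le]
      congr 1
      obtain ⟨c, rfl⟩ : ∃ c, Real.exp c = C := ⟨_, Real.exp_log hC⟩
      obtain ⟨f, rfl⟩ : ∃ f, Real.exp f = F := ⟨_, Real.exp_log hF⟩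
      obtain ⟨l, rfl⟩ : ∃ l, Real.exp l = lam := ⟨_, Real.exp_log hlam⟩
      obtain ⟨t, ht⟩ : ∃ t, Real.exp t = 2 := ⟨_, Real.exp_log two_pos⟩
      rw [← ht]
      simp only [← Real.exp_sub, ← Real.exp_mul, ← Real.exp_add]
      congr 1
      field_simp
      ring

end Measure

section Exponents

variable {n : ℕ} {p : Fin n → ℝ}

lemma one_lt_pbar (hp : ∀ i, 1 < p i) (hsum : 1 < ∑ i, 1 / p i) : 1 < pbar n p := by
  have hne : (Finset.univ : Finset (Fin n)).Nonempty :=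
    Finset.nonempty_of_sum_ne_zero (by linarith : ∑ i, 1 / p i ≠ 0)
  have hlt : ∑ i, 1 / p i < n := by
    calc ∑ i, 1 / p i < ∑ _i : Fin n, (1 : ℝ) :=
          Finset.sum_lt_sum_of_nonempty hne fun i _ =>
            (div_lt_one (by linarith [hp i])).2 (hp i)
      _ = n := by simp
  rw [pbar, one_lt_div (by linarith)]
  exact hlt

lemma pbar_lt (hsum : 1 < ∑ i, 1 / p i) : pbar n p < n := by
  have hn : (0 : ℝ) < n := by
    have hne : (Finset.univ : Finset (Fin n)).Nonempty :=
      Finset.nonempty_of_sum_ne_zero (by linarith : ∑ i, 1 / p i ≠ 0)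
    exact_mod_cast Fin.pos_iff_nonempty.2 (Finset.univ_nonempty_iff.1 hne)
  rw [pbar, div_lt_iff₀ (by linarith)]
  nlinarith

lemma pstar_pos (h0 : 0 < pbar n p) (hn : pbar n p < n) : 0 < pstar n p :=
  div_pos (mul_pos (h0.trans hn) h0) (sub_pos.2 hn)

lemma pstar_div_pbar_sub_pstar (h0 : pbar n p ≠ 0) :
    pstar n p / pbar n p - pstar n p = -(pstar n p / (pbar n p / (pbar n p - 1))) := by
  field_simp
  ring

lemma pstar_div_conj_add_one_div (h1 : 1 < pbar n p) (hn : pbar n p < n) (q : ℝ) :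
    (pstar n p / (pbar n p / (pbar n p - 1)) + 1) /
        (pstar n p / (pbar n p / (pbar n p - 1)) * q) =
      pbar n p / (pbar n p - 1) / ((n : ℝ) / ((n : ℝ) - 1) * q) := by
  have : (n : ℝ) - pbar n p ≠ 0 := by linarith
  have : pbar n p - 1 ≠ 0 := by linarith
  have : (n : ℝ) - 1 ≠ 0 := by linarith
  rw [pstar]
  field_simp
  ring

lemma pstar_div_pbar_div_pstar_div_conj_add_one_div (h1 : 1 < pbar n p) (hn : pbar n p < n)
    (q : ℝ) :
    (pstar n p / pbar n p / (pstar n p / (pbar n p / (pbar n p - 1))) + 1) / q =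
      pbar n p / (pbar n p - 1) / q := by
  have := pstar_pos (by linarith) hn
  have : pbar n p - 1 ≠ 0 := by linarith
  field_simp
  ring

end Exponents

theorem stmt18_general (n : ℕ) (p : Fin n → ℝ) (hp : ∀ i, 1 < p i)
    (hsum : 1 < ∑ i, 1 / p i) (CS : ℝ) (hCS : 0 < CS) :
    ∃ c : ℝ, 0 < c ∧
      ∀ Ω : Set (EuclideanSpace ℝ (Fin n)),
        MeasurableSet Ω → Bornology.IsBounded Ω →
      ∀ (u : EuclideanSpace ℝ (Fin n) → ℝ)
        (Du : EuclideanSpace ℝ (Fin n) → Fin n → ℝ) (F : ℝ),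
        0 < F → Measurable u → Measurable Du →
        (∀ k : ℝ, 0 < k →
          ∑ i, ∫⁻ x in Ω ∩ {x | |u x| < k}, ENNReal.ofReal (|Du x i| ^ p i) ≤
            ENNReal.ofReal (k * F)) →
        (∀ k : ℝ, 0 < k →
          (∫⁻ x in Ω, ENNReal.ofReal (|Tk k (u x)| ^ pstar n p)) ^
              (pbar n p / pstar n p) ≤
            ENNReal.ofReal CS *
              ∑ i, ∫⁻ x in Ω ∩ {x | |u x| < k}, ENNReal.ofReal (|Du x i| ^ p i)) →
        (∀ k : ℝ, 0 < k →
          volume (Ω ∩ {x | k < |u x|}) ≤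
            ENNReal.ofReal (c * F ^ (pstar n p / pbar n p) *
              k ^ (-(pstar n p / (pbar n p / (pbar n p - 1)))))) ∧
        (∀ i : Fin n, ∀ lam : ℝ, 0 < lam →
          ENNReal.ofReal lam *
              volume (Ω ∩ {x | lam < |Du x i|}) ^
                ((pbar n p / (pbar n p - 1)) / (((n : ℝ) / ((n : ℝ) - 1)) * p i)) ≤
            ENNReal.ofReal (c * F ^ ((pbar n p / (pbar n p - 1)) / p i))) := by
  have hP1 := one_lt_pbar hp hsum
  have hPn := pbar_lt hsum
  set σ := pstar n p / pbar n p
  set τ := pstar n p / (pbar n p / (pbar n p - 1))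
  have hτ : 0 < τ := div_pos (pstar_pos (by linarith) hPn) (div_pos (by linarith) (by linarith))
  set c := CS ^ σ + ∑ i, 2 ^ ((τ + 1) / (τ * p i) + (p i)⁻¹) * CS ^ (σ / (τ * p i))
  refine ⟨c, by positivity, fun Ω hΩ _ u Du F hF hu hDu ha hb => ?_⟩
  have henergy (i : Fin n) (k : ℝ) (hk : 0 < k) :
      ∫⁻ x in Ω ∩ {x | |u x| < k}, ENNReal.ofReal (|Du x i| ^ p i) ≤ ENNReal.ofReal (k * F) :=
    (Finset.single_le_sum (fun j _ => zero_le) (Finset.mem_univ i)).trans (ha k hk)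
  have hlevel (k : ℝ) (hk : 0 < k) :
      volume (Ω ∩ {x | k < |u x|}) ≤ ENNReal.ofReal ((CS * F) ^ σ * k ^ (-τ)) := by
    have h := measure_lt_abs_le_of_lintegral_Tk_rpow_le (C := CS * F) hΩ hu
      (div_pos (by linarith) (pstar_pos (by linarith) hPn)) (by positivity) hk
      ((hb k hk).trans (by
        rw [show CS * F * k = CS * (k * F) by ring, ENNReal.ofReal_mul hCS.le]
        gcongr
        exact ha k hk))
    rwa [inv_div, pstar_div_pbar_sub_pstar (by linarith)] at h
  refine ⟨fun k hk => (hlevel k hk).trans ?_, fun i lam hlam => ?_⟩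
  · rw [Real.mul_rpow hCS.le hF.le]
    gcongr
    exact le_add_of_nonneg_right (Finset.sum_nonneg fun j _ => by positivity)
  · have h := ofReal_mul_measure_lt_abs_rpow_le hΩ hu ((measurable_pi_apply i).comp hDu) hCS hF
      hτ (by linarith [hp i]) hlam hlevel (henergy i)
    rw [← pstar_div_conj_add_one_div hP1 hPn,
      ← pstar_div_pbar_div_pstar_div_conj_add_one_div hP1 hPn]
    refine h.trans ?_
    gcongr
    exact le_add_of_nonneg_of_le (by positivity) (Finset.single_le_sum
      (f := fun j => 2 ^ ((τ + 1) / (τ * p j) + (p j)⁻¹) * CS ^ (σ / (τ * p j)))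
      (fun j _ => by positivity) (Finset.mem_univ i))

/-- Let `Ω ⊂ ℝⁿ` be bounded measurable, `pᵢ ∈ (1,∞)` with
`∑ᵢ 1/pᵢ > 1`, `p* = np/(n−p)`, `p' = p/(p−1)`, `n' = n/(n−1)`. Let `u` be measurable
with a.e. partial derivatives `Du` and `F > 0`, and assume
(a) `∑ᵢ ∫_{|u|<k} |∂ᵢu|^{pᵢ} ≤ kF` for all `k > 0` and
(b) `(∫ |T_k u|^{p*})^{p/p*} ≤ C_S ∑ᵢ ∫_{|u|<k} |∂ᵢu|^{pᵢ}` for all `k > 0`.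
Then, for some `c > 0` depending only on `n, p⃗, C_S`:
(1) `meas{|u| > k} ≤ c F^{p*/p} k^{−p*/p'}` for all `k > 0`, and
(2) for each `i`, `sup_{λ>0} λ (meas{|∂ᵢu| > λ})^{p'/(n'pᵢ)} ≤ c F^{p'/pᵢ}`, i.e.
`∂ᵢu ∈ L^{n'pᵢ/p',∞}(Ω)` with norm at most `c F^{p'/pᵢ}`. -/
theorem stmt18 (n : ℕ) (hn : 2 ≤ n) (p : Fin n → ℝ) (hp : ∀ i, 1 < p i)
    (hsum : 1 < ∑ i, 1 / p i) (CS : ℝ) (hCS : 0 < CS) :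
    ∃ c : ℝ, 0 < c ∧
      ∀ Ω : Set (EuclideanSpace ℝ (Fin n)),
        MeasurableSet Ω → Bornology.IsBounded Ω →
      ∀ (u : EuclideanSpace ℝ (Fin n) → ℝ)
        (Du : EuclideanSpace ℝ (Fin n) → Fin n → ℝ) (F : ℝ),
        0 < F → Measurable u → Measurable Du →
        (∀ k : ℝ, 0 < k →
          ∑ i, ∫⁻ x in Ω ∩ {x | |u x| < k}, ENNReal.ofReal (|Du x i| ^ p i) ≤
            ENNReal.ofReal (k * F)) →
        (∀ k : ℝ, 0 < k →
          (∫⁻ x in Ω, ENNReal.ofReal (|Tk k (u x)| ^ pstar n p)) ^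
              (pbar n p / pstar n p) ≤
            ENNReal.ofReal CS *
              ∑ i, ∫⁻ x in Ω ∩ {x | |u x| < k}, ENNReal.ofReal (|Du x i| ^ p i)) →
        (∀ k : ℝ, 0 < k →
          volume (Ω ∩ {x | k < |u x|}) ≤
            ENNReal.ofReal (c * F ^ (pstar n p / pbar n p) *
              k ^ (-(pstar n p / (pbar n p / (pbar n p - 1)))))) ∧
        (∀ i : Fin n, ∀ lam : ℝ, 0 < lam →
          ENNReal.ofReal lam *
              volume (Ω ∩ {x | lam < |Du x i|}) ^
                ((pbar n p / (pbar n p - 1)) / (((n : ℝ) / ((n : ℝ) - 1)) * p i)) ≤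
            ENNReal.ofReal (c * F ^ ((pbar n p / (pbar n p - 1)) / p i))) :=
  stmt18_general n p hp hsum CS hCS
end
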